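/- arXiv:1603.07570 — 4 statements merged into one kernel-verified Lean document; each statement's English description precedes it below -/
import Mathlib

section
/- Let (R,G) be a balanced rooted graph and let 0 < t < m(R,G). Then there exists a constant D = D(t) such that for every p = p(n) ≤ n^{−1/t}, with probability 1 − o(1) no set of |R| vertices of the binomial random graph G(n,p) spans more than D copies of (R,G). -/
open Filter Asymptotics
open scoped Classical ENNReal

noncomputable section

namespace OG

/-! ### Finite graphs, represented as subgraphs of a complete graph -/

abbrev Sub (W : Type*) := (⊤ : SimpleGraph W).Subgraph

variable {W U X : Type*}

/-- number of vertices -/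
def nverts (G : Sub W) : ℕ := G.verts.ncard

/-- number of edges -/
def nedges (G : Sub W) : ℕ := G.edgeSet.ncard

/-- the density `d(G) = e_G / v_G` -/
def dd (G : Sub W) : ℝ := (nedges G : ℝ) / (nverts G : ℝ)

/-- the `1`-density `d₁(G) = e_G / (v_G - 1)` -/
def d1 (G : Sub W) : ℝ := (nedges G : ℝ) / ((nverts G : ℝ) - 1)

/-- the `2`-density `d₂(G) = (e_G - 1)/(v_G - 2)` -/
def d2 (G : Sub W) : ℝ := ((nedges G : ℝ) - 1) / ((nverts G : ℝ) - 2)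

/-- `m(G) = max_{H ⊆ G} d(H)` -/
def mD (G : Sub W) : ℝ := ⨆ H : {H : Sub W // H ≤ G}, dd H.1

/-- `m₁(G) = max_{H ⊆ G} d₁(H)` -/
def m1D (G : Sub W) : ℝ := ⨆ H : {H : Sub W // H ≤ G}, d1 H.1

/-- `m₂(G) = max_{H ⊆ G} d₂(H)` (over subgraphs with at least one edge;
on edgeless subgraphs the convention `0/0 = 0` applies) -/
def m2D (G : Sub W) : ℝ := ⨆ H : {H : Sub W // H ≤ G ∧ 1 ≤ nedges H}, d2 H.1

/-- `G` is 2-balanced if `m₂(G) = d₂(G)`. -/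
def TwoBalanced (G : Sub W) : Prop := m2D G = d2 G

/-- the recursively defined densities `m̄ʳ₂(G)`. -/
def mbar (G : Sub W) : ℕ → ℝ
  | 0 => 0
  | 1 => mD G
  | k + 2 => ⨆ H : {H : Sub W // H ≤ G},
      (nedges H.1 : ℝ) / ((nverts H.1 : ℝ) - 2 + 1 / mbar G (k + 1))

/-- view a `SimpleGraph` on a vertex type `V` as a graph with vertex set all of `V`. -/
def toSub {V : Type*} (G : SimpleGraph V) : Sub V where
  verts := Set.univ
  Adj := G.Adj
  adj_sub := fun h => G.ne_of_adj h
  edge_vert := fun _ => Set.mem_univ _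
  symm := G.symm

/-! ### Rooted graphs -/

/-- number of edges of `G` inside the root set `R`, i.e. `e_{G[R]}`. -/
def rInEdges (R : Set W) (G : Sub W) : ℕ := {e ∈ G.edgeSet | ∀ x ∈ e, x ∈ R}.ncard

/-- the density `d(R,G) = ē_G / v̄_G` of a rooted graph (with the roots `R ∩ V(G)`). -/
def rdd (R : Set W) (G : Sub W) : ℝ :=
  ((nedges G : ℝ) - (rInEdges R G : ℝ)) / ((nverts G : ℝ) - ((G.verts ∩ R).ncard : ℝ))

/-- `m(R,G) = max_{H ⊆ G} d(R ∩ V(H), H)` -/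
def mRooted (R : Set W) (G : Sub W) : ℝ := ⨆ H : {H : Sub W // H ≤ G}, rdd R H.1

/-- a rooted graph is balanced if its density attains `m(R,G)`. -/
def BalancedRooted (R : Set W) (G : Sub W) : Prop := mRooted R G = rdd R G

/-- the rooted `2`-density `d₂(R,G,t)`, valued in `ℝ≥0∞`. -/
def d2t (R : Set W) (G : Sub W) (t : ℝ) : ℝ≥0∞ :=
  if 0 < (nverts G : ℝ) - 2 - t * (rInEdges R G : ℝ) then
    ENNReal.ofReal ((((nedges G : ℝ) - (rInEdges R G : ℝ)) - 1) /
      ((nverts G : ℝ) - 2 - t * (rInEdges R G : ℝ)))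
  else ⊤

/-- `m₂(R,G,t)`, the maximum of `d₂(R ∩ V(H), H, t)` over subgraphs `H ⊆ G` with `ē_H > 1`. -/
def m2t (R : Set W) (G : Sub W) (t : ℝ) : ℝ≥0∞ :=
  ⨆ H : {H : Sub W // H ≤ G ∧ rInEdges R H + 2 ≤ nedges H}, d2t R H.1 t


/-! ### Products of rooted graphs and the families 𝓕ᵏ -/

/-- `e` is a non-root edge of `Fg` w.r.t. the root set `R`. -/
def NRe (Fg : Sub W) (R : Set W) (e : Sym2 W) : Prop := e ∈ Fg.edgeSet ∧ ¬ ∀ x ∈ e, x ∈ R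

/-- `P` (together with the placement maps `φ`, `ψ`) is a copy of the product `(R,Fg) × (h₁h₂, H)`:
it is obtained from `Fg` by attaching to every non-root edge of `Fg` a new copy of `H`,
rooted at that edge (the edge itself being kept iff `h₁h₂ ∈ E(H)`). -/
def IsProdCopyData (Fg : Sub W) (R : Set W) (H : Sub U) (h₁ h₂ : U) (P : Sub X)
    (φ : W → X) (ψ : Sym2 W → U → X) : Prop :=
  Set.InjOn φ Fg.verts ∧
  (∀ e, NRe Fg R e → Set.InjOn (ψ e) H.verts) ∧
  (∀ e, NRe Fg R e → ∀ x y : W, e = s(x, y) →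
      ({ψ e h₁, ψ e h₂} : Set X) = {φ x, φ y}) ∧
  (∀ e e', NRe Fg R e → NRe Fg R e' → e ≠ e' →
      Disjoint (ψ e '' (H.verts \ {h₁, h₂})) (ψ e' '' (H.verts \ {h₁, h₂}))) ∧
  (∀ e, NRe Fg R e → Disjoint (ψ e '' (H.verts \ {h₁, h₂})) (φ '' Fg.verts)) ∧
  (P.verts = φ '' Fg.verts ∪ ⋃ e ∈ {e | NRe Fg R e}, ψ e '' H.verts) ∧
  (∀ x y, P.Adj x y ↔
    ((∃ p q, Fg.Adj p q ∧ p ∈ R ∧ q ∈ R ∧ x = φ p ∧ y = φ q) ∨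
      ∃ e, NRe Fg R e ∧ ∃ p q, H.Adj p q ∧ x = ψ e p ∧ y = ψ e q))

/-- `P` is a copy of the product `(R,Fg) × (h₁h₂, H)` placed by `φ`. -/
def IsProdCopy (Fg : Sub W) (R : Set W) (H : Sub U) (h₁ h₂ : U) (P : Sub X) (φ : W → X) : Prop :=
  ∃ ψ, IsProdCopyData Fg R H h₁ h₂ P φ ψ

/-- `InF F u v k G a b` : the graph `G` rooted at `(a, b)` is (a copy of) a member of
the family `𝓕ᵏ` built from the graph `F` with distinguished edge `{u,v}`.
`𝓕¹` consists of a single edge rooted at its endpoints, and for `k ≥ 2`,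
`𝓕ᵏ = { ⊔_{1 ≤ i < k} (e,F)×(eᵢ,Fᵢ*) : Fᵢ* ∈ 𝓕^{≤i} }`, the parts being joined
at the common roots and otherwise disjoint. -/
inductive InF (F : Sub ℕ) (u v : ℕ) : ℕ → Sub ℕ → ℕ → ℕ → Prop
  | base (a b : ℕ) (G : Sub ℕ) (hab : a ≠ b) (hv : G.verts = {a, b})
      (he : G.edgeSet = {s(a, b)}) : InF F u v 1 G a b
  | step (k a b : ℕ) (P : ℕ → Sub ℕ) (G : Sub ℕ)
      (j : ℕ → ℕ) (Fi : ℕ → Sub ℕ) (c d : ℕ → ℕ) (φ : ℕ → ℕ → ℕ)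
      (hk : 2 ≤ k)
      (hj : ∀ i, 1 ≤ i → i < k → 1 ≤ j i ∧ j i ≤ i)
      (hrec : ∀ i, 1 ≤ i → i < k → InF F u v (j i) (Fi i) (c i) (d i))
      (hprod : ∀ i, 1 ≤ i → i < k →
        IsProdCopy F {u, v} (Fi i) (c i) (d i) (P i) (φ i) ∧
          ({φ i u, φ i v} : Set ℕ) = {a, b})
      (hdisj : ∀ i i', 1 ≤ i → i < k → 1 ≤ i' → i' < k → i ≠ i' →
        (P i).verts ∩ (P i').verts = {a, b})
      (hG : G = ⨆ i ∈ Set.Ico 1 k, P i) : InF F u v k G a b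

/-- membership in `𝓕^{≤ m} = ∪_{1 ≤ j ≤ m} 𝓕ʲ`. -/
def InFle (F : Sub ℕ) (u v : ℕ) (m : ℕ) (G : Sub ℕ) (a b : ℕ) : Prop :=
  ∃ j, 1 ≤ j ∧ j ≤ m ∧ InF F u v j G a b


/-! ### Partite graphs, regularity -/

/-- number of edges of a `SimpleGraph`. -/
def eCnt {V : Type*} (G : SimpleGraph V) : ℕ := G.edgeSet.ncard

/-- number of edges of `G` having all endpoints inside `R`, i.e. `e_{G[R]}`. -/
def eIn {V : Type*} (G : SimpleGraph V) (R : Finset V) : ℕ :=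
  {e ∈ G.edgeSet | ∀ x ∈ e, x ∈ R}.ncard

/-- `F₋`: the graph `F` with all edges inside the root set `R` removed. -/
def Fm {V : Type*} (F : SimpleGraph V) (R : Finset V) : SimpleGraph V :=
  F.deleteEdges {e | ∀ x ∈ e, x ∈ R}

/-- edge density of the bipartite pair `(s,t)` in `G`. -/
def bidensity {V : Type*} (G : SimpleGraph V) (s t : Finset V) : ℝ :=
  ({pq : V × V | pq.1 ∈ s ∧ pq.2 ∈ t ∧ G.Adj pq.1 pq.2}.ncard : ℝ) /
    ((s.card : ℝ) * (t.card : ℝ))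

/-- the pair `(s,t)` is `(ε)`-regular in `G`: for all `s' ⊆ s`, `t' ⊆ t` with
`|s'| ≥ ε|s|`, `|t'| ≥ ε|t|` the density deviates by at most `ε` times the density of the pair. -/
def EpsRegular {V : Type*} (G : SimpleGraph V) (ε : ℝ) (s t : Finset V) : Prop :=
  ∀ s' t' : Finset V, s' ⊆ s → t' ⊆ t → ε * s.card ≤ s'.card → ε * t.card ≤ t'.card →
    |bidensity G s' t' - bidensity G s t| ≤ ε * bidensity G s t

/-- the `i`-th vertex class `V_i` of the canonical `|ι|`-partite vertex set `ι × Fin n`. -/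
def prt (ι : Type*) [Fintype ι] (n : ℕ) (i : ι) : Finset (ι × Fin n) :=
  Finset.univ.filter fun pq => pq.1 = i

variable {ι : Type*} [Fintype ι]

/-- `G` is partite w.r.t. `Fm`: its edges run only between vertex classes
corresponding to edges of `Fm`. -/
def partiteOn (Fmg : SimpleGraph ι) (n : ℕ) (G : SimpleGraph (ι × Fin n)) : Prop :=
  ∀ x y, G.Adj x y → Fmg.Adj x.1 y.1

/-- number of edges of `G` between the classes `V_i` and `V_j`. -/
def ebp (n : ℕ) (G : SimpleGraph (ι × Fin n)) (i j : ι) : ℕ :=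
  {pq : (ι × Fin n) × (ι × Fin n) | pq.1.1 = i ∧ pq.2.1 = j ∧ G.Adj pq.1 pq.2}.ncard

/-- `G ∈ 𝓖(Fmg, n, m, ε)`: `G` is `Fmg`-partite, with exactly `m` edges between classes
joined by an edge of `Fmg`, all such pairs being `(ε)`-regular. -/
def inG (Fmg : SimpleGraph ι) (n m : ℕ) (ε : ℝ) (G : SimpleGraph (ι × Fin n)) : Prop :=
  partiteOn Fmg n G ∧
    ∀ i j, Fmg.Adj i j → ebp n G i j = m ∧ EpsRegular G ε (prt ι n i) (prt ι n j)

/-- `G_R` is `(F,q,ε)`-lower-regular. -/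
def LowerReg (F : SimpleGraph ι) (R : Finset ι) (n : ℕ) (GR : Finset ((↥R) → Fin n))
    (q ε : ℝ) : Prop :=
  ∀ Wf : (↥R) → Finset (Fin n), (∀ i, ε * n ≤ ((Wf i).card : ℝ)) →
    q ^ eIn F R * ∏ i, ((Wf i).card : ℝ) ≤ ((GR.filter fun e => ∀ i, e i ∈ Wf i).card : ℝ)

/-- `G_R` is `(F,q)`-upper-extensible. -/
def UpperExt (F : SimpleGraph ι) (R : Finset ι) (n : ℕ) (GR : Finset ((↥R) → Fin n))
    (q : ℝ) : Prop :=
  ∀ S : Finset ι, S ⊆ R → ∀ g : ι → Fin n,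
    ((GR.filter fun e => ∀ i : ↥R, (i : ι) ∈ S → e i = g (i : ι)).card : ℝ) ≤
      q ^ (eIn F R - eIn F S) * (n : ℝ) ^ (R.card - S.card)

/-- the number of edges, counted with multiplicity, of the multi-hypergraph `T(G, G_R)`:
for each `e ∈ G_R` the number of partite copies of `F₋` in `G` containing the vertices of `e`. -/
def Tcount (F : SimpleGraph ι) (R : Finset ι) (n : ℕ) (G : SimpleGraph (ι × Fin n))
    (GR : Finset ((↥R) → Fin n)) : ℕ :=
  ∑ e ∈ GR, {f : ι → Fin n |
      (∀ i j, (Fm F R).Adj i j → G.Adj (i, f i) (j, f j)) ∧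
      ∀ i : ↥R, f (i : ι) = e i}.ncard

/-! ### The hypergraph 𝓔(G_R, F) and its co-degree function -/

/-- the edge set of the partite copy of `Fmg` given by the transversal `f`. -/
def copyEdges (Fmg : SimpleGraph ι) {n : ℕ} (f : ι → Fin n) : Set (Sym2 (ι × Fin n)) :=
  Sym2.map (fun i => (i, f i)) '' Fmg.edgeSet

/-- the degree in `𝓔(G_R,F)` of a set `σ` of vertices (i.e. of edges of `K_{F₋,n}`):
the number of partite copies of `F₋` whose roots form an edge of `G_R` and whose
edge set contains `σ`. -/
def degI (F : SimpleGraph ι) (R : Finset ι) {n : ℕ} (GR : Finset ((↥R) → Fin n))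
    (σ : Finset (Sym2 (ι × Fin n))) : ℕ :=
  {pf : ((↥R) → Fin n) × (ι → Fin n) |
    pf.1 ∈ GR ∧ (∀ i : ↥R, pf.2 (i : ι) = pf.1 i) ∧ ↑σ ⊆ copyEdges (Fm F R) pf.2}.ncard

/-- `d^{(j)}(v)`: the maximal degree of a `j`-set containing `v`. -/
def djI (F : SimpleGraph ι) (R : Finset ι) {n : ℕ} (GR : Finset ((↥R) → Fin n))
    (jj : ℕ) (v : Sym2 (ι × Fin n)) : ℕ :=
  ⨆ σ : {σ : Finset (Sym2 (ι × Fin n)) // v ∈ σ ∧ σ.card = jj}, degI F R GR σ.1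

/-- the co-degree function `δ(𝓔(G_R,F), τ)` of Saxton–Thomason. -/
def codegFn (F : SimpleGraph ι) (R : Finset ι) {n : ℕ} (GR : Finset ((↥R) → Fin n))
    (τ : ℝ) : ℝ :=
  if (∑ v : Sym2 (ι × Fin n), degI F R GR {v}) = 0 then 0 else
    (2 : ℝ) ^ ((eCnt (Fm F R)).choose 2 - 1) *
      ∑ jj ∈ Finset.Icc 2 (eCnt (Fm F R)),
        ((∑ v : Sym2 (ι × Fin n), (djI F R GR jj v : ℝ)) /
            (τ ^ (jj - 1) * ∑ v : Sym2 (ι × Fin n), (degI F R GR {v} : ℝ))) *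
          ((2 : ℝ) ^ ((jj - 1).choose 2))⁻¹


/-! ### The online F-avoidance game -/

/-- the edges of the complete graph `K_n`. -/
abbrev En (n : ℕ) := {e : Sym2 (Fin n) // ¬ e.IsDiag}

/-- a (deterministic) Painter strategy: given the history of previously presented
edges together with their colors, and the newly presented edge, pick a color. -/
abbrev Strategy (n r : ℕ) := List (En n × Fin r) → En n → Fin r

/-- the history (presented edges with their colors, in order) after `N` rounds of
the game in which the edges arrive in the order `π` and Painter plays `σ`. -/
def histF {n r : ℕ} (σ : Strategy n r) (π : Fin (Nat.choose n 2) → En n) :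
    ℕ → List (En n × Fin r)
  | 0 => []
  | i + 1 =>
      histF σ π i ++
        if h : i < Nat.choose n 2 then
          [(π ⟨i, h⟩, σ (histF σ π i) (π ⟨i, h⟩))]
        else []

/-- the edge `e` occurs in the history `L` with color `c`. -/
def ListColored {n r : ℕ} (L : List (En n × Fin r)) (e : Sym2 (Fin n)) (c : Fin r) : Prop :=
  ∃ pr ∈ L, (pr.1 : Sym2 (Fin n)) = e ∧ pr.2 = c

/-- the graph of all edges of color `c` in the history `L`. -/
def colorGraphL {n r : ℕ} (L : List (En n × Fin r)) (c : Fin r) : SimpleGraph (Fin n) :=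
  SimpleGraph.fromEdgeSet {e | ListColored L e c}

/-- the graph of all presented edges in the history `L`. -/
def presentedGraphL {n r : ℕ} (L : List (En n × Fin r)) : SimpleGraph (Fin n) :=
  SimpleGraph.fromEdgeSet {e | ∃ c, ListColored L e c}

/-- the graph of edges colored `c` after `N` rounds. -/
def colorGraph {n r : ℕ} (σ : Strategy n r) (π : Fin (Nat.choose n 2) → En n) (N : ℕ)
    (c : Fin r) : SimpleGraph (Fin n) :=
  colorGraphL (histF σ π N) c

/-- the probability, under an edge ordering chosen uniformly at random among all
`(n choose 2)!` orderings of the edges of `K_n`, of the event `P`. -/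
def gameProb (n : ℕ) (P : (Fin (Nat.choose n 2) → En n) → Prop) : ℝ :=
  ({π : Fin (Nat.choose n 2) → En n | Function.Bijective π ∧ P π}.ncard : ℝ) /
    ({π : Fin (Nat.choose n 2) → En n | Function.Bijective π}.ncard : ℝ)

/-- some color class after `N` rounds contains a copy of the (finite) graph `F`. -/
def MonoCopy (F : Sub ℕ) {n r : ℕ} (σ : Strategy n r) (π : Fin (Nat.choose n 2) → En n)
    (N : ℕ) : Prop :=
  ∃ (c : Fin r) (φ : ℕ → Fin n), Set.InjOn φ F.verts ∧
    ∀ x y, F.Adj x y → (colorGraph σ π N c).Adj (φ x) (φ y)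

/-- Painter survives `N` rounds: after `N` edges have been presented and colored,
no color class contains a copy of `F`. -/
def Survive {α : Type*} (F : SimpleGraph α) {n r : ℕ} (σ : Strategy n r)
    (π : Fin (Nat.choose n 2) → En n) (N : ℕ) : Prop :=
  ∀ c : Fin r, ¬ ∃ φ : α ↪ Fin n, ∀ x y, F.Adj x y → (colorGraph σ π N c).Adj (φ x) (φ y)

/-! ### The binomial random graph -/

/-- probability of the event `P` for the binomial random graph `G(n,p)`. -/
def gnpProb (n : ℕ) (p : ℝ) (P : SimpleGraph (Fin n) → Prop) : ℝ :=
  ∑ G : SimpleGraph (Fin n),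
    if P G then p ^ eCnt G * (1 - p) ^ (Nat.choose n 2 - eCnt G) else 0

/-- the number of copies of the rooted graph `(ρ, G)` (with ordered roots `ρ`) spanned by
the tuple `f` in `Γ`: embeddings of `G - G[R]` carrying the roots `ρ` to `f` in order. -/
def spanCount {α : Type*} (G : SimpleGraph α) {k : ℕ} (ρ : Fin k ↪ α) {n : ℕ}
    (Γ : SimpleGraph (Fin n)) (f : Fin k ↪ Fin n) : ℕ :=
  {φ : α → Fin n | Function.Injective φ ∧ (∀ i, φ (ρ i) = f i) ∧
    ∀ x y, G.Adj x y → ¬(x ∈ Set.range ρ ∧ y ∈ Set.range ρ) → Γ.Adj (φ x) (φ y)}.ncard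

/-! ### F*-spanning subgraphs, upper uniformity -/

/-- `G` is an `F*`-spanning subgraph of `Γ` (where `F*` is rooted at `a, b`):
every edge of `G` is the root pair of a copy of `F*` in `Γ` whose non-root vertices
avoid `V(G)`, these copies being pairwise edge-disjoint. -/
def FStarSpanning {n : ℕ} (Fs : Sub ℕ) (a b : ℕ) (Γ : SimpleGraph (Fin n))
    (G : Sub (Fin n)) : Prop :=
  ∃ κ : Sym2 (Fin n) → ℕ → Fin n,
    (∀ e ∈ G.edgeSet, Set.InjOn (κ e) Fs.verts) ∧
    (∀ e ∈ G.edgeSet, ∀ x y : Fin n, e = s(x, y) →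
      ({κ e a, κ e b} : Set (Fin n)) = {x, y}) ∧
    (∀ e ∈ G.edgeSet, ∀ w ∈ Fs.verts, w ≠ a → w ≠ b → κ e w ∉ G.verts) ∧
    (∀ e ∈ G.edgeSet, ∀ w w', Fs.Adj w w' → Γ.Adj (κ e w) (κ e w')) ∧
    (∀ e ∈ G.edgeSet, ∀ e' ∈ G.edgeSet, e ≠ e' →
      Disjoint (Sym2.map (κ e) '' Fs.edgeSet) (Sym2.map (κ e') '' Fs.edgeSet))

/-- number of edges of `G` from `s` to `t`. -/
def eBetween {V : Type*} (G : Sub V) (s t : Set V) : ℕ :=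
  {pq : V × V | pq.1 ∈ s ∧ pq.2 ∈ t ∧ G.Adj pq.1 pq.2}.ncard

/-- `G` is `(η,q)`-upper-uniform. -/
def UpperUniform {V : Type*} (G : Sub V) (η q : ℝ) : Prop :=
  ∀ s t : Set V, s ⊆ G.verts → t ⊆ G.verts → Disjoint s t →
    η * (nverts G : ℝ) ≤ (s.ncard : ℝ) → η * (nverts G : ℝ) ≤ (t.ncard : ℝ) →
    (eBetween G s t : ℝ) ≤ (1 + η) * q * (s.ncard : ℝ) * (t.ncard : ℝ)

/-! ### Dangerous copies -/

/-- `col` is a dangerous `r`-coloring of `F*₋` for `F* ∈ 𝓕ᵏ` (rooted at `a,b`):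
for some decomposition of `F*` as in the construction of `𝓕ᵏ`, the `k-1` copies of
`F₋` whose roots were identified in the construction are monochromatic, with pairwise
different colors. -/
def DangerousColoring (F : Sub ℕ) (u v : ℕ) (k : ℕ) (Fs : Sub ℕ) (a b : ℕ) (r : ℕ)
    (col : Sym2 ℕ → Fin r) : Prop :=
  k = 1 ∨ ∃ (P : ℕ → Sub ℕ) (c : ℕ → Fin r),
    Fs = (⨆ i ∈ Set.Ico 1 k, P i) ∧
    (∀ i ∈ Set.Ico 1 k, ∀ i' ∈ Set.Ico 1 k, i ≠ i' →
      c i ≠ c i' ∧ (P i).verts ∩ (P i').verts = {a, b}) ∧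
    ∀ i ∈ Set.Ico 1 k, ∃ (j : ℕ) (Fi : Sub ℕ) (c' d' : ℕ) (φ : ℕ → ℕ),
      1 ≤ j ∧ j ≤ i ∧ InF F u v j Fi c' d' ∧
      IsProdCopy F {u, v} Fi c' d' (P i) φ ∧ ({φ u, φ v} : Set ℕ) = {a, b} ∧
      ∀ x y, F.Adj x y → ¬(x ∈ ({u, v} : Set ℕ) ∧ y ∈ ({u, v} : Set ℕ)) →
        col (s(φ x, φ y)) = c i

/-- `P` is a dangerous copy of `F × (e, F*₋)` in the colored graph after `N` rounds:
a copy of the product of `F` (all edges of `F` being used) with `F*₋` rooted at `(a,b)`,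
all of whose attached copies of `F*₋` are colored according to one and the same
dangerous coloring. -/
def IsDangerousCopy (F : Sub ℕ) (u v : ℕ) (r : ℕ) (Fs : Sub ℕ) (a b : ℕ) {n : ℕ}
    (σ : Strategy n r) (π : Fin (Nat.choose n 2) → En n) (N : ℕ) (P : Sub (Fin n)) : Prop :=
  ∃ (φ : ℕ → Fin n) (ψ : Sym2 ℕ → ℕ → Fin n) (col : Sym2 ℕ → Fin r),
    IsProdCopyData F ∅ (Fs.deleteEdges {s(a, b)}) a b P φ ψ ∧
    DangerousColoring F u v r Fs a b r col ∧
    ∀ e, NRe F ∅ e → ∀ x y, (Fs.deleteEdges {s(a, b)}).Adj x y →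
      ListColored (histF σ π N) (s(ψ e x, ψ e y)) (col (s(x, y)))

/-! ### The multi-phase game -/

/-- one phase of the multi-phase game: the edges of `K_n` are scanned in the order `π`;
those belonging to the phase graph `Gph` and not previously presented are presented to
Painter (playing `σ`), who colors them immediately. -/
def phaseStep {n r : ℕ} (σ : Strategy n r) (Gph : SimpleGraph (Fin n))
    (π : Fin (Nat.choose n 2) → En n) (init : List (En n × Fin r)) :
    ℕ → List (En n × Fin r)
  | 0 => init
  | jj + 1 =>
      let L := phaseStep σ Gph π init jj
      if h : jj < Nat.choose n 2 then
        if (((π ⟨jj, h⟩ : En n) : Sym2 (Fin n)) ∈ Gph.edgeSet ∧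
            ∀ pr ∈ L, pr.1 ≠ π ⟨jj, h⟩) then
          L ++ [(π ⟨jj, h⟩, σ L (π ⟨jj, h⟩))]
        else L
      else L

/-- the history after the first `i` phases of the multi-phase game with phase graphs `Gs`
and phase edge-orderings `πs`. -/
def multiHist {n r k : ℕ} (σ : Strategy n r) (Gs : Fin k → SimpleGraph (Fin n))
    (πs : Fin k → Fin (Nat.choose n 2) → En n) : ℕ → List (En n × Fin r)
  | 0 => []
  | i + 1 =>
      if h : i < k then
        phaseStep σ (Gs ⟨i, h⟩) (πs ⟨i, h⟩) (multiHist σ Gs πs i) (Nat.choose n 2)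
      else multiHist σ Gs πs i

/-- probability of the event `P` when `k` independent copies of `G(n,p)` are sampled,
each with an independent uniformly random ordering of the edges of `K_n`. -/
def phasesProb (n k : ℕ) (p : ℝ)
    (P : (Fin k → SimpleGraph (Fin n)) → (Fin k → Fin (Nat.choose n 2) → En n) → Prop) : ℝ :=
  (∑ Gs : Fin k → SimpleGraph (Fin n), ∑ πs : Fin k → Fin (Nat.choose n 2) → En n,
      if (∀ i, Function.Bijective (πs i)) ∧ P Gs πs then
        ∏ i, p ^ eCnt (Gs i) * (1 - p) ^ (Nat.choose n 2 - eCnt (Gs i))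
      else 0) /
    ({π : Fin (Nat.choose n 2) → En n | Function.Bijective π}.ncard : ℝ) ^ k

/-- witness data for Lemma `force regular`: a `t`-partite graph `G` with classes `parts`
of size `nn`, `m` edges between classes, monochromatic in color `col`, which is
`F*`-spanning for the member `(Fs, a, b)` of `𝓕^{≤|S|+1}`. -/
structure Wit (n r t : ℕ) where
  parts : Fin t → Finset (Fin n)
  G : Sub (Fin n)
  col : Fin r
  nn : ℕ
  m : ℕ
  Fs : Sub ℕ
  a : ℕ
  b : ℕ

/-- validity of a witness for Lemma `force regular` (see `Wit`). -/
def WitValid (F : Sub ℕ) (u v : ℕ) {n r t k : ℕ} (S : Finset (Fin r)) (ε η pn : ℝ)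
    (σ : Strategy n r) (Gs : Fin k → SimpleGraph (Fin n))
    (πs : Fin k → Fin (Nat.choose n 2) → En n) (w : Wit n r t) : Prop :=
  w.col ∉ S ∧
  (∃ jj : ℕ, 1 ≤ jj ∧ jj ≤ S.card + 1 ∧ InF F u v jj w.Fs w.a w.b) ∧
  η * (n : ℝ) ≤ (w.nn : ℝ) ∧
  η * (n : ℝ) ^ nverts w.Fs * pn ^ nedges w.Fs ≤ (w.m : ℝ) ∧
  (∀ i, (w.parts i).card = w.nn) ∧
  (∀ i i', i ≠ i' → Disjoint (w.parts i) (w.parts i')) ∧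
  (∀ x y, w.G.Adj x y → ∃ i i', i ≠ i' ∧ x ∈ w.parts i ∧ y ∈ w.parts i') ∧
  (∀ i i', i ≠ i' → eBetween w.G (↑(w.parts i)) (↑(w.parts i')) = w.m ∧
      EpsRegular w.G.spanningCoe ε (w.parts i) (w.parts i')) ∧
  w.G.verts = ⋃ i, ↑(w.parts i) ∧
  (∀ x y, w.G.Adj x y → ListColored (multiHist σ Gs πs k) (s(x, y)) w.col) ∧
  FStarSpanning w.Fs w.a w.b (presentedGraphL (multiHist σ Gs πs k)) w.G

/-- an equitable partition of `Fin n` into `rr` classes. -/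
def Equitable {n rr : ℕ} (P : Fin n → Fin rr) : Prop :=
  ∀ x y : Fin rr, (P ⁻¹' {x}).ncard ≤ (P ⁻¹' {y}).ncard + 1

/-- edges of the simple graph `C` between `s` and `t`. -/
def eBetweenS {V : Type*} (C : SimpleGraph V) (s t : Set V) : ℕ :=
  {pq : V × V | pq.1 ∈ s ∧ pq.2 ∈ t ∧ C.Adj pq.1 pq.2}.ncard

/-!
Suppose some root tuple spans more than `D` copies of `(R, G)` and let `m = m(R, G)`. The union of
`D + 1` of these copies has more than `B = ⌈m k / (m - t)⌉` vertices, since each copy is a map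
into it and `D = B ^ v_G`. Adding the copies one at a time, the overlap of a new copy with the
previous ones pulls back to a rooted subgraph of `G` of density at most `m`, so by balancedness
the copy contributes at least `m` new edges per new vertex. Hence the union has at least
`m (v - k) > t v` edges on `v ≤ M` vertices. In `G(n, p)` with `p ≤ n ^ (-1/t)` the expected number
of subgraphs with `v` vertices and more than `t v` edges is `O(n ^ v p ^ (⌊t v⌋ + 1)) = o(1)`,
and only the finitely many `v ≤ M` matter.
-/

section RandomGraph

open Finset

variable {n : ℕ} {p : ℝ}

lemma sum_simpleGraph_eq_sum_powerset {V R : Type*} [Fintype V] [DecidableEq V] [AddCommMonoid R]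
    (g : SimpleGraph V → R) :
    ∑ Γ, g Γ = ∑ A ∈ (⊤ : SimpleGraph V).edgeFinset.powerset,
      g (SimpleGraph.fromEdgeSet ↑A) := by
  refine sum_nbij' (·.edgeFinset) (SimpleGraph.fromEdgeSet ↑·) ?_ ?_ ?_ ?_ ?_
  · exact fun Γ _ => mem_powerset.2 (SimpleGraph.edgeFinset_mono le_top)
  · exact fun _ _ => mem_univ _
  · intro Γ _
    simp
  · intro A hA
    ext e
    simp only [SimpleGraph.mem_edgeFinset, SimpleGraph.edgeSet_fromEdgeSet, Set.mem_sdiff,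
      mem_coe, and_iff_left_iff_imp]
    intro he
    simpa using mem_powerset.1 hA he
  · intro Γ _
    simp

lemma sum_Icc_pow_mul_pow {β R : Type*} [CommSemiring R] [DecidableEq β] {S T : Finset β}
    (hST : S ⊆ T) (x y : R) :
    ∑ A ∈ Icc S T, x ^ #A * y ^ (#T - #A) = x ^ #S * (x + y) ^ (#T - #S) := by
  rw [Icc_eq_image_powerset hST, sum_image, ← card_sdiff_of_subset hST,
    ← sum_pow_mul_eq_add_pow, mul_sum]
  · refine sum_congr rfl fun B hB => ?_
    have hdisj : Disjoint S B := disjoint_of_subset_right (mem_powerset.1 hB) disjoint_sdiff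
    rw [card_union_of_disjoint hdisj, card_sdiff_of_subset hST, pow_add, Nat.sub_add_eq]
    ring
  · intro B hB B' hB' h
    have hB : Disjoint S B := disjoint_of_subset_right (mem_powerset.1 hB) disjoint_sdiff
    have hB' : Disjoint S B' := disjoint_of_subset_right (mem_powerset.1 hB') disjoint_sdiff
    rw [← union_sdiff_cancel_left hB, ← union_sdiff_cancel_left hB']
    exact congrArg (· \ S) h

lemma gnpProb_ite_nonneg (hp0 : 0 ≤ p) (hp1 : p ≤ 1) (P : Prop) (a b : ℕ) :
    0 ≤ (if P then p ^ a * (1 - p) ^ b else 0) :=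
  ite_nonneg (mul_nonneg (pow_nonneg hp0 a) (pow_nonneg (sub_nonneg.2 hp1) b)) le_rfl

lemma gnpProb_nonneg (hp0 : 0 ≤ p) (hp1 : p ≤ 1) (P : SimpleGraph (Fin n) → Prop) :
    0 ≤ gnpProb n p P :=
  sum_nonneg fun _ _ => gnpProb_ite_nonneg hp0 hp1 _ _ _

lemma gnpProb_mono (hp0 : 0 ≤ p) (hp1 : p ≤ 1) {P Q : SimpleGraph (Fin n) → Prop}
    (h : ∀ Γ, P Γ → Q Γ) : gnpProb n p P ≤ gnpProb n p Q := by
  refine sum_le_sum fun Γ _ => ?_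
  by_cases hP : P Γ
  · rw [if_pos hP, if_pos (h Γ hP)]
  · rw [if_neg hP]
    exact gnpProb_ite_nonneg hp0 hp1 _ _ _

lemma gnpProb_exists_le (hp0 : 0 ≤ p) (hp1 : p ≤ 1) {β : Type*} (s : Finset β)
    (Q : β → SimpleGraph (Fin n) → Prop) :
    gnpProb n p (fun Γ => ∃ i ∈ s, Q i Γ) ≤ ∑ i ∈ s, gnpProb n p (Q i) := by
  simp only [gnpProb]
  rw [sum_comm]
  refine sum_le_sum fun Γ _ => ?_
  split_ifs with h
  · obtain ⟨i, hi, hQ⟩ := h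
    have := single_le_sum
      (fun j _ => gnpProb_ite_nonneg hp0 hp1 (Q j Γ) (eCnt Γ) (n.choose 2 - eCnt Γ)) hi
    rwa [if_pos hQ] at this
  · exact sum_nonneg fun j _ => gnpProb_ite_nonneg hp0 hp1 _ _ _

lemma edgeSet_fromEdgeSet_of_subset_edgeFinset_top {V : Type*} [Fintype V] [DecidableEq V]
    {A : Finset (Sym2 V)} (hA : A ⊆ (⊤ : SimpleGraph V).edgeFinset) :
    (SimpleGraph.fromEdgeSet (A : Set (Sym2 V))).edgeSet = A := by
  rw [SimpleGraph.edgeSet_fromEdgeSet, sdiff_eq_left, Set.disjoint_left]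
  intro e he
  simpa using hA he

lemma gnpProb_supset_edgeSet {S : Finset (Sym2 (Fin n))}
    (hS : S ⊆ (⊤ : SimpleGraph (Fin n)).edgeFinset) :
    gnpProb n p (fun Γ => ↑S ⊆ Γ.edgeSet) = p ^ #S := by
  set K := (⊤ : SimpleGraph (Fin n)).edgeFinset
  have hK : #K = n.choose 2 := by
    rw [SimpleGraph.card_edgeFinset_top_eq_card_choose_two, Fintype.card_fin]
  have hsum := sum_Icc_pow_mul_pow hS p (1 - p)
  rw [add_sub_cancel, one_pow, mul_one, hK] at hsum
  rw [gnpProb, sum_simpleGraph_eq_sum_powerset, ← sum_filter, ← hsum]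
  have hIcc : K.powerset.filter (fun A : Finset (Sym2 (Fin n)) => (S : Set (Sym2 (Fin n))) ⊆
      (SimpleGraph.fromEdgeSet (A : Set (Sym2 (Fin n)))).edgeSet) = Icc S K := by
    ext A
    rw [mem_filter, mem_powerset, mem_Icc]
    constructor
    · rintro ⟨hAK, hSA⟩
      rw [edgeSet_fromEdgeSet_of_subset_edgeFinset_top hAK] at hSA
      exact ⟨coe_subset.1 hSA, hAK⟩
    · rintro ⟨hSA, hAK⟩
      rw [edgeSet_fromEdgeSet_of_subset_edgeFinset_top hAK]
      exact ⟨hAK, coe_subset.2 hSA⟩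
  rw [hIcc]
  refine sum_congr rfl fun A hA => ?_
  rw [eCnt, edgeSet_fromEdgeSet_of_subset_edgeFinset_top (mem_Icc.1 hA).2, Set.ncard_coe_finset]

lemma gnpProb_add_gnpProb_not (P : SimpleGraph (Fin n) → Prop) :
    gnpProb n p P + gnpProb n p (fun Γ => ¬ P Γ) = 1 := by
  have htot := gnpProb_supset_edgeSet (n := n) (p := p) (empty_subset _)
  rw [card_empty, pow_zero] at htot
  rw [← htot, gnpProb, gnpProb, gnpProb, ← sum_add_distrib]
  refine sum_congr rfl fun Γ _ => ?_
  by_cases hP : P Γ <;> simp [hP]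

lemma gnpProb_supset_edgeSet_le (hp0 : 0 ≤ p) (S : Finset (Sym2 (Fin n))) :
    gnpProb n p (fun Γ => ↑S ⊆ Γ.edgeSet) ≤ p ^ #S := by
  by_cases hS : S ⊆ (⊤ : SimpleGraph (Fin n)).edgeFinset
  · exact (gnpProb_supset_edgeSet hS).le
  · have hnone : ∀ Γ : SimpleGraph (Fin n), ¬ ↑S ⊆ Γ.edgeSet := fun Γ hΓ =>
      hS fun e he => SimpleGraph.edgeFinset_mono le_top (Γ.mem_edgeFinset.2 (hΓ he))
    simp only [gnpProb, hnone, if_false, sum_const_zero]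
    positivity

end RandomGraph

section DenseSubgraphs

open Finset

lemma natCast_rpow_neg_le_one (n : ℕ) {s : ℝ} (hs : 0 < s) : (n : ℝ) ^ (-s) ≤ 1 := by
  rcases n.eq_zero_or_pos with rfl | hn
  · rw [Nat.cast_zero, Real.zero_rpow (neg_ne_zero.2 hs.ne')]
    exact zero_le_one
  · exact Real.rpow_le_one_of_one_le_of_nonpos (Nat.one_le_cast.2 hn) (neg_nonpos.2 hs.le)

def HasDenseSubgraph {V : Type*} (Γ : SimpleGraph V) (M : ℕ) (t : ℝ) : Prop :=
  ∃ (S : Finset V) (E : Finset (Sym2 V)), E ⊆ S.sym2 ∧ ↑E ⊆ Γ.edgeSet ∧ #S ≤ M ∧ t * #S < #E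

lemma gnpProb_hasDenseSubgraph_le {n : ℕ} {p : ℝ} (hp0 : 0 ≤ p) (hp1 : p ≤ 1) (M : ℕ) {t : ℝ}
    (ht : 0 ≤ t) :
    gnpProb n p (HasDenseSubgraph · M t) ≤
      ∑ v ∈ range (M + 1), 2 ^ (v + 1).choose 2 * ((n : ℝ) ^ v * p ^ (⌊t * v⌋₊ + 1)) := by
  calc gnpProb n p (HasDenseSubgraph · M t)
      ≤ gnpProb n p (fun Γ => ∃ v ∈ range (M + 1), ∃ S ∈ powersetCard v (univ : Finset (Fin n)),
          ∃ E ∈ S.sym2.powerset.filter (fun E => ⌊t * v⌋₊ < #E), ↑E ⊆ Γ.edgeSet) := by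
        refine gnpProb_mono hp0 hp1 fun Γ ⟨S, E, hES, hEΓ, hSM, hdense⟩ => ?_
        refine ⟨#S, mem_range.2 (Nat.lt_succ_of_le hSM), S, mem_powersetCard_univ.2 rfl, E, ?_, hEΓ⟩
        exact mem_filter.2 ⟨mem_powerset.2 hES, (Nat.floor_lt (by positivity)).2 hdense⟩
    _ ≤ ∑ v ∈ range (M + 1), ∑ S ∈ powersetCard v (univ : Finset (Fin n)),
          ∑ E ∈ S.sym2.powerset.filter (fun E => ⌊t * v⌋₊ < #E), p ^ #E := by
        refine (gnpProb_exists_le hp0 hp1 _ _).trans (sum_le_sum fun v _ => ?_)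
        refine (gnpProb_exists_le hp0 hp1 _ _).trans (sum_le_sum fun S _ => ?_)
        exact (gnpProb_exists_le hp0 hp1 _ _).trans
          (sum_le_sum fun E _ => gnpProb_supset_edgeSet_le hp0 E)
    _ ≤ ∑ v ∈ range (M + 1), ∑ S ∈ powersetCard v (univ : Finset (Fin n)),
          2 ^ (v + 1).choose 2 * p ^ (⌊t * v⌋₊ + 1) := by
        refine sum_le_sum fun v _ => sum_le_sum fun S hS => ?_
        calc _ ≤ ∑ E ∈ S.sym2.powerset.filter (fun E => ⌊t * v⌋₊ < #E), p ^ (⌊t * v⌋₊ + 1) :=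
              sum_le_sum fun E hE => pow_le_pow_of_le_one hp0 hp1 (mem_filter.1 hE).2
          _ ≤ #S.sym2.powerset * p ^ (⌊t * v⌋₊ + 1) := by
              rw [sum_const, nsmul_eq_mul]
              gcongr
              exact filter_subset _ _
          _ = 2 ^ (v + 1).choose 2 * p ^ (⌊t * v⌋₊ + 1) := by
              rw [card_powerset, card_sym2, (mem_powersetCard.1 hS).2]
              push_cast
              rfl
    _ ≤ ∑ v ∈ range (M + 1), 2 ^ (v + 1).choose 2 * ((n : ℝ) ^ v * p ^ (⌊t * v⌋₊ + 1)) := by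
        refine sum_le_sum fun v _ => ?_
        rw [sum_const, card_powersetCard, card_univ, Fintype.card_fin, nsmul_eq_mul,
          mul_left_comm]
        gcongr
        exact_mod_cast Nat.choose_le_pow n v

lemma tendsto_natCast_pow_mul_pow_of_le_rpow {p : ℕ → ℝ} {t : ℝ} (ht : 0 < t) {v e : ℕ}
    (hve : t * v < e) (hp0 : ∀ n, 0 ≤ p n) (hp : ∀ n : ℕ, p n ≤ (n : ℝ) ^ (-(1 / t))) :
    Tendsto (fun n : ℕ => (n : ℝ) ^ v * p n ^ e) atTop (nhds 0) := by
  have hc : (v : ℝ) - e / t < 0 := by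
    rw [sub_neg, lt_div_iff₀ ht, mul_comm]
    exact hve
  have hlim : Tendsto (fun n : ℕ => (n : ℝ) ^ ((v : ℝ) - e / t)) atTop (nhds 0) := by
    have := (tendsto_rpow_neg_atTop (neg_pos.2 hc)).comp tendsto_natCast_atTop_atTop
    simp only [neg_neg] at this
    exact this
  refine squeeze_zero' (Eventually.of_forall fun n => by have := hp0 n; positivity) ?_ hlim
  filter_upwards [eventually_gt_atTop 0] with n hn
  have hn : (0 : ℝ) < n := Nat.cast_pos.2 hn
  calc (n : ℝ) ^ v * p n ^ e ≤ (n : ℝ) ^ v * ((n : ℝ) ^ (-(1 / t))) ^ e := by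
        gcongr
        exacts [hp0 n, hp n]
    _ = (n : ℝ) ^ ((v : ℝ) - e / t) := by
        rw [← Real.rpow_natCast, ← Real.rpow_natCast, ← Real.rpow_mul hn.le,
          ← Real.rpow_add hn]
        ring_nf

lemma tendsto_gnpProb_hasDenseSubgraph {p : ℕ → ℝ} {t : ℝ} (ht : 0 < t) (M : ℕ)
    (hp0 : ∀ n, 0 ≤ p n) (hp1 : ∀ n, p n ≤ 1) (hp : ∀ n : ℕ, p n ≤ (n : ℝ) ^ (-(1 / t))) :
    Tendsto (fun n => gnpProb n (p n) (HasDenseSubgraph · M t)) atTop (nhds 0) := by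
  have hbound := tendsto_finsetSum (range (M + 1)) fun v _ =>
    (tendsto_natCast_pow_mul_pow_of_le_rpow ht (e := ⌊t * v⌋₊ + 1)
      (by exact_mod_cast Nat.lt_floor_add_one (t * v)) hp0 hp).const_mul (2 ^ (v + 1).choose 2 : ℝ)
  refine squeeze_zero (fun n => gnpProb_nonneg (hp0 n) (hp1 n) _)
    (fun n => gnpProb_hasDenseSubgraph_le (hp0 n) (hp1 n) M ht.le) ?_
  simpa using hbound

lemma tendsto_gnpProb_one_of_not_imp {p : ℕ → ℝ} (hp0 : ∀ n, 0 ≤ p n) (hp1 : ∀ n, p n ≤ 1)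
    {P Q : (n : ℕ) → SimpleGraph (Fin n) → Prop} (hPQ : ∀ n Γ, ¬ P n Γ → Q n Γ)
    (hQ : Tendsto (fun n => gnpProb n (p n) (Q n)) atTop (nhds 0)) :
    Tendsto (fun n => gnpProb n (p n) (P n)) atTop (nhds 1) := by
  have hcompl : ∀ n, gnpProb n (p n) (P n) = 1 - gnpProb n (p n) (fun Γ => ¬ P n Γ) :=
    fun n => eq_sub_of_add_eq (gnpProb_add_gnpProb_not _)
  refine tendsto_of_tendsto_of_tendsto_of_le_of_le (by simpa using tendsto_const_nhds.sub hQ)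
    tendsto_const_nhds (fun n => ?_) (fun n => ?_)
  · rw [hcompl]
    exact sub_le_sub_left (gnpProb_mono (hp0 n) (hp1 n) (hPQ n)) 1
  · rw [hcompl]
    exact sub_le_self 1 (gnpProb_nonneg (hp0 n) (hp1 n) _)

end DenseSubgraphs

section RootedCopies

open Finset

variable {α β : Type*} {G : SimpleGraph α} {k : ℕ} {ρ : Fin k ↪ α}

structure IsRootedCopy (G : SimpleGraph α) (ρ : Fin k ↪ α) (Γ : SimpleGraph β) (f : Fin k → β)
    (φ : α → β) : Prop where
  injective : Function.Injective φ
  map_root : ∀ i, φ (ρ i) = f i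
  map_adj : ∀ x y, G.Adj x y → ¬(x ∈ Set.range ρ ∧ y ∈ Set.range ρ) → Γ.Adj (φ x) (φ y)

lemma spanCount_eq_ncard {n : ℕ} (Γ : SimpleGraph (Fin n)) (f : Fin k ↪ Fin n) :
    spanCount G ρ Γ f = {φ | IsRootedCopy G ρ Γ f φ}.ncard := by
  rw [spanCount]
  congr 1
  ext φ
  exact ⟨fun ⟨h₁, h₂, h₃⟩ => ⟨h₁, h₂, h₃⟩, fun ⟨h₁, h₂, h₃⟩ => ⟨h₁, h₂, h₃⟩⟩

variable [Fintype α]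

def nonRootEdges (G : SimpleGraph α) (ρ : Fin k ↪ α) : Finset (Sym2 α) :=
  G.edgeFinset.filter fun e => ¬ ∀ x ∈ e, x ∈ Set.range ρ

lemma card_le_mRooted_mul {S : Finset α} {E : Finset (Sym2 α)} (hRS : ∀ i, ρ i ∈ S)
    (hE : E ⊆ nonRootEdges G ρ) (hES : E ⊆ S.sym2) :
    (#E : ℝ) ≤ mRooted (Set.range ρ) (toSub G) * (#S - k) := by
  have hEG : ∀ e ∈ E, e ∈ G.edgeSet := fun e he => G.mem_edgeFinset.1 (mem_filter.1 (hE he)).1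
  let H : Sub α :=
    { verts := S
      Adj := fun x y => s(x, y) ∈ E
      adj_sub := fun h => G.ne_of_adj (hEG _ h)
      edge_vert := fun h => mem_sym2_iff.1 (hES h) _ (Sym2.mem_mk_left _ _)
      symm := ⟨fun x y h => by rwa [Sym2.eq_swap]⟩ }
  have hHG : H ≤ toSub G := ⟨fun x _ => Set.mem_univ x, fun x y h => hEG _ h⟩
  have hedges : H.edgeSet = E := by
    ext e
    induction e using Sym2.ind
    rfl
  have hroots : rInEdges (Set.range ρ) H = 0 := by
    rw [rInEdges, hedges, Set.ncard_eq_zero]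
    ext e
    simp only [Set.mem_ofPred_eq, Set.mem_empty_iff_false, iff_false, not_and, mem_coe]
    exact fun he => (mem_filter.1 (hE he)).2
  have hRset : Set.range ρ ⊆ S := Set.range_subset_iff.2 hRS
  have hRcard : (H.verts ∩ Set.range ρ).ncard = k := by
    rw [Set.inter_eq_self_of_subset_right hRset, ← Set.image_univ,
      Set.ncard_image_of_injective _ ρ.injective, Set.ncard_univ, Nat.card_eq_fintype_card,
      Fintype.card_fin]
  have hle : rdd (Set.range ρ) H ≤ mRooted (Set.range ρ) (toSub G) :=
    le_ciSup (f := fun H : {H : Sub α // H ≤ toSub G} => rdd (Set.range ρ) H.1)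
      (Set.finite_range _).bddAbove ⟨H, hHG⟩
  rw [rdd, nverts, nedges, hedges, hroots, hRcard, Set.ncard_coe_finset,
    Set.ncard_coe_finset, Nat.cast_zero, sub_zero] at hle
  have hRimg : univ.image ρ ⊆ S := image_subset_iff.2 fun i _ => hRS i
  have hRk : #(univ.image ρ) = k := by
    rw [card_image_of_injective _ ρ.injective, card_univ, Fintype.card_fin]
  have hkS : k ≤ #S := hRk ▸ card_le_card hRimg
  rcases hkS.lt_or_eq with hlt | heq
  · rwa [← div_le_iff₀ (by rw [sub_pos]; exact_mod_cast hlt)]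
  -- `rdd` divides by `#S - k = 0` here; instead, `S` is then the root set and `E` is empty.
  · have hS : S = univ.image ρ :=
      (eq_of_subset_of_card_le hRimg (by rw [hRk, heq])).symm
    have hE0 : E = ∅ := by
      refine eq_empty_of_forall_notMem fun e he => (mem_filter.1 (hE he)).2 fun x hx => ?_
      have := mem_sym2_iff.1 (hES he) x hx
      rw [hS] at this
      simpa using this
    simp [hE0, heq]

lemma card_nonRootEdges_eq (hbal : BalancedRooted (Set.range ρ) (toSub G))
    (hm : mRooted (Set.range ρ) (toSub G) ≠ 0) :
    (#(nonRootEdges G ρ) : ℝ) = mRooted (Set.range ρ) (toSub G) * (Fintype.card α - k) := by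
  have hedges : (toSub G).edgeSet = G.edgeFinset := by
    ext e
    induction e using Sym2.ind
    simp [toSub]
  have hrootEdges : {e ∈ (toSub G).edgeSet | ∀ x ∈ e, x ∈ Set.range ρ} =
      ↑(G.edgeFinset.filter fun e => ∀ x ∈ e, x ∈ Set.range ρ) := by
    rw [hedges, coe_filter]
    rfl
  have hsplit : nedges (toSub G) = rInEdges (Set.range ρ) (toSub G) + #(nonRootEdges G ρ) := by
    rw [nedges, rInEdges, hrootEdges, hedges, Set.ncard_coe_finset, Set.ncard_coe_finset,
      nonRootEdges, card_filter_add_card_filter_not]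
  have hverts : nverts (toSub G) = Fintype.card α := by
    rw [nverts, ← Nat.card_eq_fintype_card, ← Set.ncard_univ]
    rfl
  have hroots : ((toSub G).verts ∩ Set.range ρ).ncard = k := by
    rw [show (toSub G).verts = Set.univ from rfl, Set.univ_inter, ← Set.image_univ,
      Set.ncard_image_of_injective _ ρ.injective, Set.ncard_univ, Nat.card_eq_fintype_card,
      Fintype.card_fin]
  rw [BalancedRooted, rdd, hsplit, hverts, hroots, Nat.cast_add, add_sub_cancel_left] at hbal
  rw [hbal, div_mul_cancel₀]
  rintro hzero
  rw [hzero, div_zero] at hbal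
  exact hm hbal

lemma mRooted_mul_card_filter_le_card_filter (hbal : BalancedRooted (Set.range ρ) (toSub G))
    (hm : mRooted (Set.range ρ) (toSub G) ≠ 0) {f : Fin k → β} {φ : α → β}
    (hφf : ∀ i, φ (ρ i) = f i) {V : Finset β} {E : Finset (Sym2 β)} (hfV : ∀ i, f i ∈ V)
    (hEV : E ⊆ V.sym2) :
    mRooted (Set.range ρ) (toSub G) * #(univ.filter fun x => φ x ∉ V) ≤
      #((nonRootEdges G ρ).filter fun e => Sym2.map φ e ∉ E) := by
  have hold := card_le_mRooted_mul (G := G) (ρ := ρ)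
    (S := univ.filter fun x => φ x ∈ V) (E := (nonRootEdges G ρ).filter fun e => Sym2.map φ e ∈ E)
    (fun i => mem_filter.2 ⟨mem_univ _, hφf i ▸ hfV i⟩) (filter_subset _ _) fun e he => by
      refine mem_sym2_iff.2 fun x hx => mem_filter.2 ⟨mem_univ _, ?_⟩
      exact mem_sym2_iff.1 (hEV (mem_filter.1 he).2) _ (Sym2.mem_map.2 ⟨x, hx, rfl⟩)
  have hverts := card_filter_add_card_filter_not (s := univ) fun x => φ x ∈ V
  have hedges := card_filter_add_card_filter_not (s := nonRootEdges G ρ)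
    fun e => Sym2.map φ e ∈ E
  have hbalanced := card_nonRootEdges_eq hbal hm
  rw [card_univ] at hverts
  rw [← hverts, ← hedges, Nat.cast_add, Nat.cast_add] at hbalanced
  linear_combination hold - hbalanced

lemma card_union_image_of_injective {γ δ : Type*} [DecidableEq δ] (A : Finset δ) {φ : γ → δ}
    (hφ : Function.Injective φ) (s : Finset γ) :
    #(A ∪ s.image φ) = #A + #(s.filter fun x => φ x ∉ A) := by
  rw [union_comm, ← card_sdiff_add_card, sdiff_eq_filter, filter_image,
    card_image_of_injective _ hφ, add_comm]

def spanVerts (f : Fin k → β) (Φ : Finset (α → β)) : Finset β :=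
  univ.image f ∪ Φ.biUnion fun φ => univ.image φ

def spanEdges (G : SimpleGraph α) (ρ : Fin k ↪ α) (Φ : Finset (α → β)) : Finset (Sym2 β) :=
  Φ.biUnion fun φ => (nonRootEdges G ρ).image (Sym2.map φ)

lemma spanEdges_subset_sym2 (f : Fin k → β) (Φ : Finset (α → β)) :
    spanEdges G ρ Φ ⊆ (spanVerts f Φ).sym2 := by
  intro e he
  obtain ⟨φ, hφ, hφe⟩ := mem_biUnion.1 he
  obtain ⟨e, -, rfl⟩ := mem_image.1 hφe
  refine mem_sym2_iff.2 fun y hy => ?_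
  obtain ⟨x, -, rfl⟩ := Sym2.mem_map.1 hy
  exact mem_union_right _ (mem_biUnion.2 ⟨φ, hφ, mem_image_of_mem _ (mem_univ x)⟩)

lemma mRooted_mul_le_card_spanEdges (hbal : BalancedRooted (Set.range ρ) (toSub G))
    (hm : 0 < mRooted (Set.range ρ) (toSub G)) (f : Fin k → β) (Φ : Finset (α → β))
    (hΦ : ∀ φ ∈ Φ, Function.Injective φ ∧ ∀ i, φ (ρ i) = f i) :
    mRooted (Set.range ρ) (toSub G) * (#(spanVerts f Φ) - k) ≤ #(spanEdges G ρ Φ) := by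
  induction Φ using Finset.induction_on with
  | empty =>
    have hk : #(univ.image f) ≤ k := card_image_le.trans (by rw [card_univ, Fintype.card_fin])
    simp only [spanVerts, spanEdges, biUnion_empty, union_empty, card_empty, Nat.cast_zero]
    exact mul_nonpos_of_nonneg_of_nonpos hm.le (sub_nonpos.2 (by exact_mod_cast hk))
  | insert φ Φ hφΦ ih =>
    obtain ⟨hφ, hφf⟩ := hΦ φ (mem_insert_self φ Φ)
    have ih := ih fun ψ hψ => hΦ ψ (mem_insert_of_mem hψ)
    have hverts : spanVerts f (insert φ Φ) = spanVerts f Φ ∪ univ.image φ := by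
      rw [spanVerts, spanVerts, biUnion_insert, union_left_comm, union_comm (univ.image φ)]
    have hedges : spanEdges G ρ (insert φ Φ) =
        spanEdges G ρ Φ ∪ (nonRootEdges G ρ).image (Sym2.map φ) := by
      rw [spanEdges, spanEdges, biUnion_insert, union_comm]
    have hnew := mRooted_mul_card_filter_le_card_filter (V := spanVerts f Φ) hbal hm.ne' hφf
      (fun i => mem_union_left _ (mem_image_of_mem f (mem_univ i)))
      (spanEdges_subset_sym2 (G := G) (ρ := ρ) f Φ)
    rw [hverts, hedges, card_union_image_of_injective _ hφ,
      card_union_image_of_injective _ (Sym2.map.injective hφ)]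
    push_cast
    linarith

lemma spanEdges_subset_edgeSet {Γ : SimpleGraph β} {f : Fin k → β} {Φ : Finset (α → β)}
    (hΦ : ∀ φ ∈ Φ, IsRootedCopy G ρ Γ f φ) : ↑(spanEdges G ρ Φ) ⊆ Γ.edgeSet := by
  intro e he
  obtain ⟨φ, hφ, hφe⟩ := mem_biUnion.1 he
  obtain ⟨e, hnonroot, rfl⟩ := mem_image.1 hφe
  obtain ⟨heG, hroot⟩ := mem_filter.1 hnonroot
  induction e using Sym2.ind with
  | _ x y =>
    refine (hΦ φ hφ).map_adj x y (G.mem_edgeFinset.1 heG) fun ⟨hx, hy⟩ => hroot fun z hz => ?_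
    rcases Sym2.mem_iff.1 hz with rfl | rfl
    exacts [hx, hy]

lemma card_spanVerts_le (f : Fin k → β) (Φ : Finset (α → β)) :
    #(spanVerts f Φ) ≤ k + #Φ * Fintype.card α := by
  refine (card_union_le _ _).trans (add_le_add ?_ ?_)
  · exact card_image_le.trans (by rw [card_univ, Fintype.card_fin])
  · exact card_biUnion_le_card_mul _ _ _ fun φ _ => card_image_le.trans (card_univ).le

lemma card_le_card_spanVerts_pow (f : Fin k → β) (Φ : Finset (α → β)) :
    #Φ ≤ #(spanVerts f Φ) ^ Fintype.card α := by
  have hΦ : Φ ⊆ Fintype.piFinset fun _ => spanVerts f Φ := fun φ hφ =>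
    Fintype.mem_piFinset.2 fun x =>
      mem_union_right _ (mem_biUnion.2 ⟨φ, hφ, mem_image_of_mem _ (mem_univ x)⟩)
  simpa using card_le_card hΦ

lemma exists_hasDenseSubgraph_of_lt_spanCount (hbal : BalancedRooted (Set.range ρ) (toSub G))
    {t : ℝ} (ht0 : 0 ≤ t) (ht : t < mRooted (Set.range ρ) (toSub G)) :
    ∃ D M : ℕ, ∀ (n : ℕ) (Γ : SimpleGraph (Fin n)) (f : Fin k ↪ Fin n),
      D < spanCount G ρ Γ f → HasDenseSubgraph Γ M t := by
  set m := mRooted (Set.range ρ) (toSub G)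
  have hm : 0 < m := ht0.trans_lt ht
  set a := Fintype.card α
  set B := ⌈m * k / (m - t)⌉₊
  refine ⟨B ^ a, k + (B ^ a + 1) * a, fun n Γ f hD => ?_⟩
  obtain ⟨Φ, hΦ, hcard⟩ : ∃ Φ : Finset (α → Fin n),
      (∀ φ ∈ Φ, IsRootedCopy G ρ Γ f φ) ∧ #Φ = B ^ a + 1 := by
    rw [spanCount_eq_ncard, Set.ncard_eq_toFinset_card'] at hD
    obtain ⟨Φ, hsub, hcard⟩ := exists_subset_card_eq hD
    exact ⟨Φ, fun φ hφ => by simpa using hsub hφ, hcard⟩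
  set V := spanVerts f Φ
  have hBV : B < #V := by
    by_contra! hVB
    have := (card_le_card_spanVerts_pow f Φ).trans (Nat.pow_le_pow_left hVB a)
    omega
  have hkV : m * k < (m - t) * #V := by
    have := (Nat.le_ceil _).trans_lt (Nat.cast_lt.2 hBV : (B : ℝ) < #V)
    rw [div_lt_iff₀ (sub_pos.2 ht)] at this
    linarith
  have hE := mRooted_mul_le_card_spanEdges hbal hm f Φ fun φ hφ =>
    ⟨(hΦ φ hφ).injective, (hΦ φ hφ).map_root⟩
  refine ⟨V, spanEdges G ρ Φ, spanEdges_subset_sym2 f Φ, spanEdges_subset_edgeSet hΦ,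
    hcard ▸ card_spanVerts_le f Φ, ?_⟩
  linarith

end RootedCopies

theorem stmt2 {α : Type} [Fintype α] (G : SimpleGraph α) (k : ℕ) (ρ : Fin k ↪ α)
    (hbal : BalancedRooted (Set.range ρ) (toSub G))
    (t : ℝ) (ht0 : 0 < t) (ht : t < mRooted (Set.range ρ) (toSub G)) :
    ∃ D : ℕ, ∀ p : ℕ → ℝ, (∀ n, 0 ≤ p n) → (∀ n : ℕ, p n ≤ (n : ℝ) ^ (-(1 / t))) →
      Tendsto (fun n => gnpProb n (p n) fun Γ => ∀ f : Fin k ↪ Fin n, spanCount G ρ Γ f ≤ D)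
        atTop (nhds 1) := by
  obtain ⟨D, M, hdense⟩ := exists_hasDenseSubgraph_of_lt_spanCount hbal ht0.le ht
  refine ⟨D, fun p hp0 hp => ?_⟩
  have hp1 : ∀ n, p n ≤ 1 := fun n => (hp n).trans (natCast_rpow_neg_le_one n (by positivity))
  refine tendsto_gnpProb_one_of_not_imp hp0 hp1 (fun n Γ hΓ => ?_)
    (tendsto_gnpProb_hasDenseSubgraph ht0 M hp0 hp1 hp)
  obtain ⟨f, hf⟩ := not_forall.1 hΓ
  exact hdense n Γ f (not_le.1 hf)

end OG
end
end

section
/- Let F be a 2-balanced graph that is not a tree with a distinguished edge e such that m₂(F − e) ≤ m̄²₂(F), and let 1 ≤ k ≤ r. Then every F* ∈ 𝓕ᵏ satisfies (v_{F*} − 2) − e_{F*}/m̄ʳ₂(F) ≥ −1/m̄^{r−k+1}₂(F); equivalently, n^{v_{F*}−2} n^{−e_{F*}/m̄ʳ₂(F)} ≥ n^{−1/m̄^{r−k+1}₂(F)} for all n ≥ 1. -/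
open Filter Asymptotics
open scoped Classical ENNReal

noncomputable section

namespace OG

variable {W U X : Type*}

variable {ι : Type*} [Fintype ι]

/-! Induction along the recursive construction of `𝓕ᵏ`, with `M = m̄ʳ₂(F)`. Gluing graphs
rooted at an edge adds up their excesses `(v - 2) - (e - 1)/M`. The `i`-th part `(e,F) × (eᵢ,Fᵢ*)`
consists of `F` and `e_F - 1` copies of `Fᵢ*`, where `Fᵢ* ∈ 𝓕ʲ` with `j ≤ i`; by induction and
monotonicity of `m̄ˢ₂(F)` in `s` its excess is at least `v_F - 2 - (e_F - 1)/m̄^{r-i+1}₂(F)`.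
Testing the supremum defining `m̄^{r-i+1}₂(F)` on `H = F` bounds this below by
`1/m̄^{r-i+1}₂(F) - 1/m̄^{r-i}₂(F)`, and these bounds telescope over `i < k`. -/

open SimpleGraph

lemma edgeSet_finite_of_verts_finite {G : Sub W} (h : G.verts.Finite) : G.edgeSet.Finite := by
  apply ((h.prod h).image fun p : W × W => s(p.1, p.2)).subset
  rintro ⟨x, y⟩ hxy
  exact ⟨(x, y), ⟨G.edge_vert hxy, G.edge_vert (G.adj_symm hxy)⟩, rfl⟩

lemma finite_subgraphs_le {G : Sub W} (h : G.verts.Finite) : Finite {H : Sub W // H ≤ G} := by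
  have hfin : {H : Sub W | H ≤ G}.Finite := by
    refine Set.Finite.of_finite_image (f := fun H => (H.verts, H.edgeSet)) ?_ ?_
    · refine (h.finite_subsets.prod (edgeSet_finite_of_verts_finite h).finite_subsets).subset ?_
      rintro _ ⟨H, hH, rfl⟩
      exact ⟨hH.1, Subgraph.edgeSet_mono hH⟩
    · intro H _ H' _ hHH'
      obtain ⟨hV, hE⟩ := Prod.ext_iff.mp hHH'
      refine Subgraph.ext hV ?_
      ext x y
      rw [← Subgraph.mem_edgeSet, ← Subgraph.mem_edgeSet, show H.edgeSet = H'.edgeSet from hE]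
  exact hfin.to_subtype

lemma nverts_le_of_le {G H : Sub W} (hHG : H ≤ G) (hG : G.verts.Finite) :
    nverts H ≤ nverts G :=
  Set.ncard_le_ncard hHG.1 hG

section SingleEdge

variable {u v : W} (huv : (⊤ : SimpleGraph W).Adj u v)
include huv

lemma nverts_subgraphOfAdj : nverts ((⊤ : SimpleGraph W).subgraphOfAdj huv) = 2 :=
  Set.ncard_pair huv

lemma nedges_subgraphOfAdj : nedges ((⊤ : SimpleGraph W).subgraphOfAdj huv) = 1 := by
  rw [nedges, edgeSet_subgraphOfAdj, Set.ncard_singleton]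

end SingleEdge

section Mbar

variable {F : Sub W} (hfin : F.verts.Finite)
include hfin

lemma le_mbar_one {H : Sub W} (hH : H ≤ F) : dd H ≤ mbar F 1 :=
  have := finite_subgraphs_le hfin
  le_ciSup (f := fun H : {H : Sub W // H ≤ F} => dd H.1) (Set.finite_range _).bddAbove ⟨H, hH⟩

lemma le_mbar_succ {s : ℕ} (hs : 1 ≤ s) {H : Sub W} (hH : H ≤ F) :
    (nedges H : ℝ) / ((nverts H : ℝ) - 2 + 1 / mbar F s) ≤ mbar F (s + 1) := by
  obtain ⟨t, rfl⟩ : ∃ t, s = t + 1 := ⟨s - 1, by omega⟩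
  have := finite_subgraphs_le hfin
  exact le_ciSup (f := fun H : {H : Sub W // H ≤ F} =>
    (nedges H.1 : ℝ) / ((nverts H.1 : ℝ) - 2 + 1 / mbar F (t + 1)))
    (Set.finite_range _).bddAbove ⟨H, hH⟩

variable {u v : W} (huv : F.Adj u v)
include huv

lemma mbar_one_pos : 0 < mbar F 1 := by
  have h := le_mbar_one hfin (subgraphOfAdj_le_of_adj F huv)
  rw [dd, nverts_subgraphOfAdj, nedges_subgraphOfAdj] at h
  linarith

/-- Witnessed by a single edge `H`, for which `e_H / (v_H - 2 + 1/x) = x`. -/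
lemma mbar_le_mbar_succ {s : ℕ} (hs : 1 ≤ s) : mbar F s ≤ mbar F (s + 1) := by
  have h := le_mbar_succ hfin hs (subgraphOfAdj_le_of_adj F huv)
  rw [nverts_subgraphOfAdj, nedges_subgraphOfAdj] at h
  simpa using h

lemma mbar_mono {s t : ℕ} (hs : 1 ≤ s) (hst : s ≤ t) : mbar F s ≤ mbar F t := by
  induction t, hst using Nat.le_induction with
  | base => exact le_rfl
  | succ t hst ih => exact ih.trans (mbar_le_mbar_succ hfin huv (hs.trans hst))

lemma mbar_pos {s : ℕ} (hs : 1 ≤ s) : 0 < mbar F s :=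
  (mbar_one_pos hfin huv).trans_le (mbar_mono hfin huv le_rfl hs)

lemma nedges_div_mbar_succ_le {s : ℕ} (hs : 1 ≤ s) :
    (nedges F : ℝ) / mbar F (s + 1) ≤ (nverts F : ℝ) - 2 + 1 / mbar F s := by
  have hv : (2 : ℝ) ≤ nverts F := by
    exact_mod_cast (nverts_subgraphOfAdj (F.adj_sub huv)).symm.le.trans
      (nverts_le_of_le (subgraphOfAdj_le_of_adj F huv) hfin)
  have hpos : 0 < (nverts F : ℝ) - 2 + 1 / mbar F s := by
    have := mbar_pos hfin huv hs
    positivity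
  rw [div_le_iff₀ (mbar_pos hfin huv (by omega)), mul_comm, ← div_le_iff₀ hpos]
  exact le_mbar_succ hfin hs le_rfl

end Mbar

section Cardinality

variable {α κ : Type*} {t : Set κ} {s : κ → Set α} {n : ℕ}

lemma ncard_biUnion_le_mul (ht : t.Finite) (hs : ∀ i ∈ t, (s i).ncard ≤ n) :
    (⋃ i ∈ t, s i).ncard ≤ t.ncard * n := by
  have hst : (⋃ i ∈ t, s i) = ⋃ i ∈ ht.toFinset, s i := by simp
  rw [hst, Set.ncard_eq_toFinset_card t ht, ← smul_eq_mul]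
  exact (ht.toFinset.set_ncard_biUnion_le s).trans
    (Finset.sum_le_card_nsmul _ _ _ fun i hi => hs i (ht.mem_toFinset.mp hi))

lemma ncard_biUnion_eq_mul (ht : t.Finite) (hfin : ∀ i ∈ t, (s i).Finite)
    (hdisj : t.PairwiseDisjoint s) (hs : ∀ i ∈ t, (s i).ncard = n) :
    (⋃ i ∈ t, s i).ncard = t.ncard * n := by
  rw [ht.ncard_biUnion hfin hdisj, finsum_mem_congr rfl hs,
    finsum_mem_eq_finite_toFinset_sum _ ht, Finset.sum_const, smul_eq_mul,
    Set.ncard_eq_toFinset_card t ht]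

end Cardinality

lemma ncard_NRe_add_rInEdges {G : Sub W} (R : Set W) (hG : G.edgeSet.Finite) :
    {e | NRe G R e}.ncard + rInEdges R G = nedges G := by
  have hNRe : {e | NRe G R e} = G.edgeSet \ {e ∈ G.edgeSet | ∀ x ∈ e, x ∈ R} := by
    ext e
    simp [NRe]
  rw [hNRe, rInEdges, Set.ncard_sdiff_add_ncard_of_subset (Set.sep_subset _ _) hG, nedges]

lemma rInEdges_pair {G : Sub W} {u v : W} (huv : G.Adj u v) : rInEdges {u, v} G = 1 := by
  rw [rInEdges, ← Set.ncard_singleton s(u, v)]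
  congr 1
  ext e
  induction e using Sym2.ind with
  | _ x y =>
    simp only [Set.mem_sep_iff, Subgraph.mem_edgeSet, Sym2.mem_iff, forall_eq_or_imp,
      forall_eq, Set.mem_insert_iff, Set.mem_singleton_iff]
    constructor
    · rintro ⟨hxy, hx | hx, hy | hy⟩ <;> subst hx hy
      · exact absurd rfl hxy.ne
      · rfl
      · exact Sym2.eq_swap
      · exact absurd rfl hxy.ne
    · intro h
      rcases Sym2.eq_iff.mp h with ⟨rfl, rfl⟩ | ⟨rfl, rfl⟩
      · exact ⟨huv, by tauto⟩
      · exact ⟨huv.symm, by tauto⟩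

section Product

variable {Fg : Sub W} {R : Set W} {H : Sub U} {h₁ h₂ : U} {P : Sub X} {φ : W → X}
  {ψ : Sym2 W → U → X}

lemma finite_NRe (hFg : Fg.verts.Finite) : {e | NRe Fg R e}.Finite :=
  (edgeSet_finite_of_verts_finite hFg).subset fun _ he => he.1

namespace IsProdCopyData

variable (hP : IsProdCopyData Fg R H h₁ h₂ P φ ψ) (hFg : Fg.verts.Finite) (hH : H.verts.Finite)
include hP hFg hH

lemma verts_finite : P.verts.Finite := by
  rw [hP.2.2.2.2.2.1]
  exact (hFg.image φ).union ((finite_NRe hFg).biUnion fun _ _ => hH.image _)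

lemma le_nverts :
    nverts Fg + {e | NRe Fg R e}.ncard * (H.verts \ {h₁, h₂}).ncard ≤ nverts P := by
  have hPfin := hP.verts_finite hFg hH
  obtain ⟨hφ, hψ, -, hdisj, hdisjφ, hV, -⟩ := hP
  set S := {e | NRe Fg R e}
  have hS : S.Finite := finite_NRe hFg
  have hcopies : (⋃ e ∈ S, ψ e '' (H.verts \ {h₁, h₂})).ncard
      = S.ncard * (H.verts \ {h₁, h₂}).ncard :=
    ncard_biUnion_eq_mul hS (fun _ _ => hH.sdiff.image _)
      (fun e he e' he' hne => hdisj e e' he he' hne)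
      fun e he => ((hψ e he).mono Set.sdiff_subset).ncard_image
  have hsub : φ '' Fg.verts ∪ ⋃ e ∈ S, ψ e '' (H.verts \ {h₁, h₂}) ⊆ P.verts := by
    rw [hV]
    exact Set.union_subset_union_right _
      (Set.biUnion_mono le_rfl fun e _ => Set.image_mono Set.sdiff_subset)
  have hcount : (φ '' Fg.verts ∪ ⋃ e ∈ S, ψ e '' (H.verts \ {h₁, h₂})).ncard
      = nverts Fg + S.ncard * (H.verts \ {h₁, h₂}).ncard := by
    rw [Set.ncard_union_eq ?_ (hFg.image φ) (hS.biUnion fun _ _ => hH.sdiff.image _),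
      hφ.ncard_image, hcopies, nverts]
    exact Set.disjoint_iUnion₂_right.mpr fun e he => (hdisjφ e he).symm
  exact hcount ▸ Set.ncard_le_ncard hsub hPfin

lemma nedges_le :
    nedges P ≤ rInEdges R Fg + {e | NRe Fg R e}.ncard * nedges H := by
  obtain ⟨-, -, -, -, -, -, hadj⟩ := hP
  set S := {e | NRe Fg R e}
  set E₀ := {e ∈ Fg.edgeSet | ∀ x ∈ e, x ∈ R}
  have hE₀ : E₀.Finite := (edgeSet_finite_of_verts_finite hFg).subset (Set.sep_subset _ _)
  have hHE : H.edgeSet.Finite := edgeSet_finite_of_verts_finite hH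
  have hsub : P.edgeSet ⊆ Sym2.map φ '' E₀ ∪ ⋃ e ∈ S, Sym2.map (ψ e) '' H.edgeSet := by
    intro f hf
    induction f using Sym2.ind with
    | _ x y =>
      rcases (hadj x y).mp hf with
        ⟨p, q, hpq, hp, hq, rfl, rfl⟩ | ⟨e, he, p, q, hpq, rfl, rfl⟩
      · refine Or.inl ⟨s(p, q), ⟨hpq, ?_⟩, rfl⟩
        simp only [Sym2.mem_iff, forall_eq_or_imp, forall_eq]
        exact ⟨hp, hq⟩
      · exact Or.inr (Set.mem_biUnion he ⟨s(p, q), hpq, rfl⟩)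
  calc nedges P
      ≤ (Sym2.map φ '' E₀ ∪ ⋃ e ∈ S, Sym2.map (ψ e) '' H.edgeSet).ncard :=
        Set.ncard_le_ncard hsub ((hE₀.image _).union
          ((finite_NRe hFg).biUnion fun _ _ => hHE.image _))
    _ ≤ (Sym2.map φ '' E₀).ncard + (⋃ e ∈ S, Sym2.map (ψ e) '' H.edgeSet).ncard :=
        Set.ncard_union_le _ _
    _ ≤ rInEdges R Fg + S.ncard * nedges H :=
        add_le_add (Set.ncard_image_le hE₀)
          (ncard_biUnion_le_mul (finite_NRe hFg) fun _ _ => Set.ncard_image_le hHE)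

end IsProdCopyData

end Product

lemma IsProdCopy.adj_of_mem {Fg : Sub W} {R : Set W} {H : Sub U} {h₁ h₂ : U} {P : Sub X}
    {φ : W → X} (hP : IsProdCopy Fg R H h₁ h₂ P φ) {p q : W} (hpq : Fg.Adj p q) (hp : p ∈ R)
    (hq : q ∈ R) : P.Adj (φ p) (φ q) := by
  obtain ⟨ψ, -, -, -, -, -, -, hadj⟩ := hP
  exact (hadj _ _).mpr (Or.inl ⟨p, q, hpq, hp, hq, rfl, rfl⟩)

lemma adj_of_pair_eq {G : Sub X} {x y a b : X} (h : G.Adj x y)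
    (hxy : ({x, y} : Set X) = {a, b}) : G.Adj a b := by
  rcases Set.pair_eq_pair_iff.mp hxy with ⟨rfl, rfl⟩ | ⟨rfl, rfl⟩
  exacts [h, h.symm]

lemma ncard_sdiff_pair_add_two {s : Set X} (hs : s.Finite) {a b : X} (hab : a ≠ b) (ha : a ∈ s)
    (hb : b ∈ s) : (s \ {a, b}).ncard + 2 = s.ncard := by
  rw [← Set.ncard_pair hab]
  exact Set.ncard_sdiff_add_ncard_of_subset (Set.pair_subset ha hb) hs

lemma IsProdCopy.sub_le_excess {F : Sub W} {u v : W} {H : Sub U} {c d : U} {P : Sub X}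
    {φ : W → X} (hP : IsProdCopy F {u, v} H c d P φ) (hF : F.verts.Finite) (huv : F.Adj u v)
    (hH : H.verts.Finite) (hcd : H.Adj c d) {M x y : ℝ} (hM : 0 < M)
    (hHx : -x ≤ ((nverts H : ℝ) - 2) - nedges H / M)
    (hFxy : nedges F * x ≤ (nverts F : ℝ) - 2 + y) :
    x - y ≤ ((nverts P : ℝ) - 2) - ((nedges P : ℝ) - 1) / M := by
  obtain ⟨ψ, hP⟩ := hP
  have hNRe := ncard_NRe_add_rInEdges {u, v} (edgeSet_finite_of_verts_finite hF)
  rw [rInEdges_pair huv] at hNRe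
  have hS : ({e | NRe F {u, v} e}.ncard : ℝ) = nedges F - 1 := by
    rw [← hNRe]; push_cast; ring
  have hHv : ((H.verts \ {c, d}).ncard : ℝ) = nverts H - 2 := by
    rw [nverts, ← ncard_sdiff_pair_add_two hH hcd.ne (H.edge_vert hcd) (H.edge_vert hcd.symm)]
    push_cast; ring
  have hV : (nverts F : ℝ) + (nedges F - 1) * (nverts H - 2) ≤ nverts P := by
    rw [← hS, ← hHv]; exact_mod_cast hP.le_nverts hF hH
  have hE : (nedges P : ℝ) - 1 ≤ (nedges F - 1) * nedges H := by
    have := hP.nedges_le hF hH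
    rw [rInEdges_pair huv] at this
    rw [← hS, sub_le_iff_le_add']
    exact_mod_cast this
  have he : (0 : ℝ) ≤ nedges F - 1 := by rw [← hS]; positivity
  have hEM := div_le_div_of_nonneg_right hE hM.le
  calc x - y ≤ nverts F - 2 - (nedges F - 1) * x := by linarith
    _ ≤ nverts F - 2 + (nedges F - 1) * ((nverts H - 2) - nedges H / M) := by
        linarith [mul_le_mul_of_nonneg_left hHx he]
    _ = nverts F + (nedges F - 1) * (nverts H - 2) - 2 - (nedges F - 1) * nedges H / M := by
        ring
    _ ≤ _ := by linarith

section Join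

variable {κ : Type*} (s : Finset κ) {P : κ → Sub W} {a b : W}

lemma verts_biSup : (⨆ i ∈ (s : Set κ), P i).verts = ⋃ i ∈ s, (P i).verts := by
  simp only [Subgraph.verts_iSup, Finset.mem_coe]

lemma edgeSet_biSup : (⨆ i ∈ (s : Set κ), P i).edgeSet = ⋃ i ∈ s, (P i).edgeSet := by
  simp only [Subgraph.edgeSet_iSup, Finset.mem_coe]

lemma nverts_biSup_add (hs : s.Nonempty) (hfin : ∀ i ∈ s, (P i).verts.Finite)
    (hadj : ∀ i ∈ s, (P i).Adj a b)
    (hinter : ∀ i ∈ s, ∀ j ∈ s, i ≠ j → (P i).verts ∩ (P j).verts = {a, b}) :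
    nverts (⨆ i ∈ (s : Set κ), P i) + 2 * s.card = 2 + ∑ i ∈ s, nverts (P i) := by
  obtain ⟨i₀, hi₀⟩ := hs
  have hab : a ≠ b := (hadj i₀ hi₀).ne
  have hsplit : (⋃ i ∈ s, (P i).verts) = {a, b} ∪ ⋃ i ∈ s, ((P i).verts \ {a, b}) := by
    ext x
    simp only [Set.mem_iUnion, Set.mem_union, Set.mem_sdiff, exists_prop, Set.mem_insert_iff,
      Set.mem_singleton_iff]
    constructor
    · rintro ⟨i, hi, hx⟩
      by_cases hxab : x = a ∨ x = b
      exacts [Or.inl hxab, Or.inr ⟨i, hi, hx, hxab⟩]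
    · rintro ((rfl | rfl) | ⟨i, hi, hx, -⟩)
      exacts [⟨i₀, hi₀, (P i₀).edge_vert (hadj i₀ hi₀)⟩,
        ⟨i₀, hi₀, (P i₀).edge_vert (hadj i₀ hi₀).symm⟩, ⟨i, hi, hx⟩]
  have hparts : (⋃ i ∈ s, ((P i).verts \ {a, b})).ncard
      = ∑ i ∈ s, ((P i).verts \ {a, b}).ncard := by
    rw [← finsum_mem_coe_finset, ← Set.Finite.ncard_biUnion s.finite_toSet
      (fun i hi => (hfin i hi).sdiff)]
    · simp only [Finset.mem_coe]
    · intro i hi j hj hij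
      refine Set.disjoint_left.mpr fun x hxi hxj => hxi.2 ?_
      rw [← hinter i hi j hj hij]
      exact ⟨hxi.1, hxj.1⟩
  have hcount :
      ∑ i ∈ s, nverts (P i) = ∑ i ∈ s, ((P i).verts \ {a, b}).ncard + 2 * s.card := by
    rw [mul_comm, ← smul_eq_mul, ← Finset.sum_const, ← Finset.sum_add_distrib]
    exact Finset.sum_congr rfl fun i hi => (ncard_sdiff_pair_add_two (hfin i hi) hab
      ((P i).edge_vert (hadj i hi)) ((P i).edge_vert (hadj i hi).symm)).symm
  rw [nverts, verts_biSup, hsplit, Set.ncard_union_eq ?_ (Set.toFinite _) ?_,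
    Set.ncard_pair hab, hparts, hcount]
  · ring
  · exact Set.disjoint_iUnion₂_right.mpr fun i _ => Set.disjoint_sdiff_right
  · exact s.finite_toSet.biUnion fun i hi => (hfin i hi).sdiff

lemma nedges_biSup_add_le (hfin : ∀ i ∈ s, (P i).verts.Finite)
    (hadj : ∀ i ∈ s, (P i).Adj a b) :
    nedges (⨆ i ∈ (s : Set κ), P i) + s.card ≤ 1 + ∑ i ∈ s, nedges (P i) := by
  have hE : ∀ i ∈ s, (P i).edgeSet.Finite :=
    fun i hi => edgeSet_finite_of_verts_finite (hfin i hi)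
  have hsub :
      (⋃ i ∈ s, (P i).edgeSet) ⊆ {s(a, b)} ∪ ⋃ i ∈ s, ((P i).edgeSet \ {s(a, b)}) := by
    intro e he
    by_cases hab : e = s(a, b)
    · exact Or.inl hab
    · obtain ⟨i, hi, he⟩ := Set.mem_iUnion₂.mp he
      exact Or.inr (Set.mem_biUnion hi ⟨he, hab⟩)
  have hcount :
      ∑ i ∈ s, nedges (P i) = ∑ i ∈ s, ((P i).edgeSet \ {s(a, b)}).ncard + s.card := by
    rw [Finset.card_eq_sum_ones, ← Finset.sum_add_distrib]
    refine Finset.sum_congr rfl fun i hi => ?_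
    rw [nedges, ← Set.ncard_sdiff_add_ncard_of_subset (Set.singleton_subset_iff.mpr
      (show s(a, b) ∈ (P i).edgeSet from hadj i hi)) (hE i hi), Set.ncard_singleton]
  have h₁ := Set.ncard_le_ncard hsub
    ((Set.toFinite _).union (s.finite_toSet.biUnion fun i hi => (hE i hi).sdiff))
  have h₂ := Set.ncard_union_le {s(a, b)} (⋃ i ∈ s, ((P i).edgeSet \ {s(a, b)}))
  have h₃ := s.set_ncard_biUnion_le fun i => (P i).edgeSet \ {s(a, b)}
  rw [Set.ncard_singleton] at h₂
  rw [nedges, edgeSet_biSup, hcount]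
  omega

/-- The excess `(v - 2) - (e - 1)/M` of graphs rooted at an edge is superadditive under gluing
along that edge. -/
lemma sum_excess_le_excess_biSup (hs : s.Nonempty) (hfin : ∀ i ∈ s, (P i).verts.Finite)
    (hadj : ∀ i ∈ s, (P i).Adj a b)
    (hinter : ∀ i ∈ s, ∀ j ∈ s, i ≠ j → (P i).verts ∩ (P j).verts = {a, b})
    {M : ℝ} (hM : 0 < M) :
    ∑ i ∈ s, (((nverts (P i) : ℝ) - 2) - ((nedges (P i) : ℝ) - 1) / M)
      ≤ ((nverts (⨆ i ∈ (s : Set κ), P i) : ℝ) - 2)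
        - ((nedges (⨆ i ∈ (s : Set κ), P i) : ℝ) - 1) / M := by
  have hv :
      ((nverts (⨆ i ∈ (s : Set κ), P i) : ℝ) - 2) = ∑ i ∈ s, ((nverts (P i) : ℝ) - 2) := by
    have := congrArg (Nat.cast (R := ℝ)) (nverts_biSup_add s hs hfin hadj hinter)
    push_cast at this
    rw [Finset.sum_sub_distrib, Finset.sum_const, nsmul_eq_mul]
    linarith
  have he :
      ((nedges (⨆ i ∈ (s : Set κ), P i) : ℝ) - 1) ≤ ∑ i ∈ s, ((nedges (P i) : ℝ) - 1) := by
    have := (Nat.cast_le (α := ℝ)).mpr (nedges_biSup_add_le s hfin hadj)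
    push_cast at this
    rw [Finset.sum_sub_distrib, Finset.sum_const, nsmul_eq_mul, mul_one]
    linarith
  rw [Finset.sum_sub_distrib, ← Finset.sum_div, hv]
  gcongr

end Join

lemma sum_Ico_sub_telescope {M : Type*} [AddCommGroup M] (f : ℕ → M) {k r : ℕ} (hk : 1 ≤ k)
    (hkr : k ≤ r) :
    ∑ i ∈ Finset.Ico 1 k, (f (r - i + 1) - f (r - i)) = f r - f (r - k + 1) := by
  calc _ = ∑ i ∈ Finset.Ico 1 k, (-f (r - (i + 1) + 1) - -f (r - i + 1)) :=
        Finset.sum_congr rfl fun i hi => by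
          rw [show r - (i + 1) + 1 = r - i by have := (Finset.mem_Ico.mp hi).2; omega]
          abel
    _ = -f (r - k + 1) - -f (r - 1 + 1) := Finset.sum_Ico_sub (fun i => -f (r - i + 1)) hk
    _ = _ := by rw [Nat.sub_add_cancel (hk.trans hkr)]; abel

lemma IsProdCopy.adj_and_finite {F : Sub W} {u v : W} {H : Sub U} {c d : U} {P : Sub X}
    {φ : W → X} (hP : IsProdCopy F {u, v} H c d P φ) (hF : F.verts.Finite) (huv : F.Adj u v)
    (hH : H.verts.Finite) {a b : X} (hroots : ({φ u, φ v} : Set X) = {a, b}) :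
    P.Adj a b ∧ P.verts.Finite :=
  ⟨adj_of_pair_eq (hP.adj_of_mem huv (by simp) (by simp)) hroots,
    hP.choose_spec.verts_finite hF hH⟩

namespace InF

variable {F : Sub ℕ} (hfin : F.verts.Finite) {u v : ℕ} (huv : F.Adj u v)
include hfin huv

lemma adj_and_finite {k : ℕ} {G : Sub ℕ} {a b : ℕ} (h : InF F u v k G a b) :
    G.Adj a b ∧ G.verts.Finite := by
  induction h with
  | base a b G hab hv he =>
    refine ⟨?_, hv ▸ Set.toFinite _⟩
    show s(a, b) ∈ G.edgeSet
    rw [he]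
    rfl
  | step k a b P G _ _ _ _ _ hk _ _ hprod _ hG ih =>
    have hP : ∀ i ∈ Finset.Ico 1 k, (P i).Adj a b ∧ (P i).verts.Finite := fun i hi =>
      have ⟨hi1, hik⟩ := Finset.mem_Ico.mp hi
      (hprod i hi1 hik).1.adj_and_finite hfin huv (ih i hi1 hik).2 (hprod i hi1 hik).2
    subst hG
    rw [← Finset.coe_Ico]
    refine ⟨?_, ?_⟩
    · simp only [Subgraph.iSup_adj]
      exact ⟨1, by simp; omega, (hP 1 (by simp; omega)).1⟩
    · rw [verts_biSup]
      exact (Finset.finite_toSet _).biUnion fun i hi => (hP i hi).2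

lemma neg_inv_mbar_le {k : ℕ} {G : Sub ℕ} {a b : ℕ} (h : InF F u v k G a b) {r : ℕ}
    (hkr : k ≤ r) :
    -(1 / mbar F (r - k + 1)) ≤ ((nverts G : ℝ) - 2) - (nedges G : ℝ) / mbar F r := by
  induction h generalizing r with
  | base a b G hab hv he =>
    rw [nverts, hv, Set.ncard_pair hab, nedges, he, Set.ncard_singleton, Nat.sub_add_cancel hkr]
    norm_num
  | step k a b P G j _ _ _ _ hk hj hrec hprod hdisj hG ih =>
    have hM : 0 < mbar F r := mbar_pos hfin huv (by omega)
    have hparts : ∀ i ∈ Finset.Ico 1 k, 1 / mbar F (r - i + 1) - 1 / mbar F (r - i)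
        ≤ ((nverts (P i) : ℝ) - 2) - ((nedges (P i) : ℝ) - 1) / mbar F r := by
      intro i hi
      obtain ⟨hi1, hik⟩ := Finset.mem_Ico.mp hi
      obtain ⟨hj1, hji⟩ := hj i hi1 hik
      obtain ⟨hcd, hFi⟩ := (hrec i hi1 hik).adj_and_finite hfin huv
      refine (hprod i hi1 hik).1.sub_le_excess hfin huv hFi hcd hM ?_ ?_
      · calc -(1 / mbar F (r - i + 1)) ≤ -(1 / mbar F (r - j i + 1)) := by
              have := mbar_pos hfin huv (s := r - i + 1) (by omega)
              gcongr
              exact mbar_mono hfin huv (by omega) (by omega)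
          _ ≤ _ := ih i hi1 hik (by omega)
      · rw [mul_one_div]
        exact nedges_div_mbar_succ_le hfin huv (s := r - i) (by omega)
    have htel := sum_Ico_sub_telescope (fun s => 1 / mbar F s) (by omega : 1 ≤ k) hkr
    have hfinP : ∀ i ∈ Finset.Ico 1 k, (P i).Adj a b ∧ (P i).verts.Finite := fun i hi =>
      have ⟨hi1, hik⟩ := Finset.mem_Ico.mp hi
      (hprod i hi1 hik).1.adj_and_finite hfin huv
        ((hrec i hi1 hik).adj_and_finite hfin huv).2 (hprod i hi1 hik).2
    have hjoin := sum_excess_le_excess_biSup (Finset.Ico 1 k) ⟨1, by simp; omega⟩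
      (fun i hi => (hfinP i hi).2) (fun i hi => (hfinP i hi).1)
      (fun i hi i' hi' hne => hdisj i i' (Finset.mem_Ico.mp hi).1 (Finset.mem_Ico.mp hi).2
        (Finset.mem_Ico.mp hi').1 (Finset.mem_Ico.mp hi').2 hne) hM
    rw [Finset.coe_Ico, ← hG] at hjoin
    have hdiv : ((nedges G : ℝ) - 1) / mbar F r = nedges G / mbar F r - 1 / mbar F r :=
      sub_div _ _ _
    linarith [Finset.sum_le_sum hparts]

end InF

theorem stmt6_general (F : Sub ℕ) (hfin : F.verts.Finite) (u v : ℕ) (huv : F.Adj u v)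
    (r k : ℕ) (hkr : k ≤ r)
    (Fs : Sub ℕ) (a b : ℕ) (hFs : InF F u v k Fs a b) :
    -(1 / mbar F (r - k + 1)) ≤ ((nverts Fs : ℝ) - 2) - (nedges Fs : ℝ) / mbar F r :=
  hFs.neg_inv_mbar_le hfin huv hkr

theorem stmt6 (F : Sub ℕ) (hfin : F.verts.Finite) (u v : ℕ) (huv : F.Adj u v)
    (hbal : TwoBalanced F) (htree : ¬ F.coe.IsTree)
    (hme : m2D (F.deleteEdges {s(u, v)}) ≤ mbar F 2)
    (r k : ℕ) (hk1 : 1 ≤ k) (hkr : k ≤ r)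
    (Fs : Sub ℕ) (a b : ℕ) (hFs : InF F u v k Fs a b) :
    -(1 / mbar F (r - k + 1)) ≤ ((nverts Fs : ℝ) - 2) - (nedges Fs : ℝ) / mbar F r :=
  stmt6_general F hfin u v huv r k hkr Fs a b hFs

end OG
end
end

section
/- Suppose F is a 2-balanced graph with at least two edges and F₁, F₂ are graphs isomorphic to F that intersect in at least one, but not all, edges. If p = p(n) satisfies 0 < p and p = o(n^{−1/m₂(F)}), then n^{v_F} p^{e_F} / (n^{v_{F₁∪F₂}} p^{e_{F₁∪F₂}}) → ∞ as n → ∞. -/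
open Filter Asymptotics
open scoped Classical ENNReal

noncomputable section

/-!
Write `I = F₁ ⊓ F₂`. Counting vertices and edges of `F₁ ⊔ F₂` by inclusion–exclusion, the ratio
is `(n ^ (v_F - v_I) * p ^ (e_F - e_I))⁻¹`. Through `F₁ ≃ F`, `I` is a subgraph of `F` with at
least one edge, so `e_I - 1 ≤ m₂(F) (v_I - 2)`, while 2-balancedness gives
`e_F - 1 = m₂(F) (v_F - 2)`. Subtracting, `m₂(F) (v_F - v_I) ≤ e_F - e_I`, and `e_F - e_I ≥ 1`
because `I` misses an edge of `F₁`. Hence `p = o(n ^ (-1/m₂(F)))` makes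
`n ^ (v_F - v_I) * p ^ (e_F - e_I) = o(n ^ (v_F - v_I - (e_F - e_I) / m₂(F))) = o(1)`.
-/

namespace SimpleGraph.Subgraph

variable {V V' : Type*} {G : SimpleGraph V} {G' : SimpleGraph V'}

lemma ncard_verts_map {f : G →g G'} (hf : Function.Injective f) (H : G.Subgraph) :
    (H.map f).verts.ncard = H.verts.ncard :=
  Set.ncard_image_of_injective _ hf

lemma ncard_edgeSet_map {f : G →g G'} (hf : Function.Injective f) (H : G.Subgraph) :
    (H.map f).edgeSet.ncard = H.edgeSet.ncard := by
  rw [edgeSet_map]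
  exact Set.ncard_image_of_injective _ (Sym2.map.injective hf)

lemma ncard_edgeSet_coe (H : G.Subgraph) : H.coe.edgeSet.ncard = H.edgeSet.ncard := by
  rw [← image_coe_edgeSet_coe]
  exact (Set.ncard_image_of_injective _ (Sym2.map.injective Subtype.val_injective)).symm

lemma finite_edgeSet {H : G.Subgraph} (h : H.verts.Finite) : H.edgeSet.Finite := by
  have : Finite H.verts := h
  rw [← image_coe_edgeSet_coe]
  exact (Set.toFinite _).image _

lemma ncard_edgeSet_le_choose_two {H : G.Subgraph} (h : H.verts.Finite) :
    H.edgeSet.ncard ≤ H.verts.ncard.choose 2 := by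
  have : Fintype H.verts := h.fintype
  rw [← ncard_edgeSet_coe, ← Nat.card_coe_set_eq, ← Nat.card_coe_set_eq, Nat.card_eq_fintype_card,
    Nat.card_eq_fintype_card, ← edgeFinset_card]
  exact H.coe.card_edgeFinset_le_card_choose_two

end SimpleGraph.Subgraph

namespace OG

open SimpleGraph Subgraph

section Counting

variable {F F₁ H : Sub W}

lemma nverts_coeSubgraph (K : F.coe.Subgraph) : nverts (Subgraph.coeSubgraph K) = K.verts.ncard :=
  ncard_verts_map hom_injective K

lemma nedges_coeSubgraph (K : F.coe.Subgraph) : nedges (Subgraph.coeSubgraph K) = K.edgeSet.ncard :=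
  ncard_edgeSet_map hom_injective K

lemma nverts_mono (hF : F.verts.Finite) (h : H ≤ F) : nverts H ≤ nverts F :=
  Set.ncard_le_ncard h.1 hF

lemma nedges_mono (hF : F.verts.Finite) (h : H ≤ F) : nedges H ≤ nedges F :=
  Set.ncard_le_ncard (edgeSet_mono h) (finite_edgeSet hF)

lemma nedges_le_choose_two (hF : F.verts.Finite) : nedges F ≤ (nverts F).choose 2 :=
  ncard_edgeSet_le_choose_two hF

lemma nverts_sup_add_nverts_inf {F₂ : Sub W} (h₁ : F₁.verts.Finite) (h₂ : F₂.verts.Finite) :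
    nverts (F₁ ⊔ F₂) + nverts (F₁ ⊓ F₂) = nverts F₁ + nverts F₂ :=
  Set.ncard_union_add_ncard_inter _ _ h₁ h₂

lemma nedges_sup_add_nedges_inf {F₂ : Sub W} (h₁ : F₁.verts.Finite) (h₂ : F₂.verts.Finite) :
    nedges (F₁ ⊔ F₂) + nedges (F₁ ⊓ F₂) = nedges F₁ + nedges F₂ := by
  rw [nedges, nedges, Subgraph.edgeSet_sup, Subgraph.edgeSet_inf]
  exact Set.ncard_union_add_ncard_inter _ _ (finite_edgeSet h₁) (finite_edgeSet h₂)

end Counting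

section Isomorphic

variable {F F₁ : Sub W}

lemma finite_verts_of_iso (φ : F₁.coe ≃g F.coe) (hF : F.verts.Finite) : F₁.verts.Finite :=
  have : Finite F.verts := hF
  Finite.of_equiv _ φ.toEquiv.symm

lemma nverts_eq_of_iso (φ : F₁.coe ≃g F.coe) : nverts F₁ = nverts F := by
  rw [← map_hom_top F₁, ← map_hom_top F, ← map_iso_top φ, nverts_coeSubgraph, nverts_coeSubgraph,
    ncard_verts_map φ.injective]

lemma nedges_eq_of_iso (φ : F₁.coe ≃g F.coe) : nedges F₁ = nedges F := by
  rw [← map_hom_top F₁, ← map_hom_top F, ← map_iso_top φ, nedges_coeSubgraph, nedges_coeSubgraph,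
    ncard_edgeSet_map φ.injective]

lemma exists_le_nverts_nedges_eq_of_iso (φ : F₁.coe ≃g F.coe) {H : Sub W} (hH : H ≤ F₁) :
    ∃ H' ≤ F, nverts H' = nverts H ∧ nedges H' = nedges H := by
  have hH : Subgraph.coeSubgraph (F₁.restrict H) = H := by
    rw [coeSubgraph_restrict_eq, inf_eq_right.mpr hH]
  refine ⟨Subgraph.coeSubgraph ((F₁.restrict H).map φ.toHom), coeSubgraph_le _, ?_, ?_⟩
  · conv_rhs => rw [← hH]
    rw [nverts_coeSubgraph, nverts_coeSubgraph, ncard_verts_map φ.injective]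
  · conv_rhs => rw [← hH]
    rw [nedges_coeSubgraph, nedges_coeSubgraph, ncard_edgeSet_map φ.injective]

end Isomorphic

section Density

variable {F H : Sub W}

lemma d2_le_nedges (hH : 1 ≤ nedges H) : d2 H ≤ nedges H := by
  have he : (1 : ℝ) ≤ nedges H := by exact_mod_cast hH
  rcases le_or_gt (nverts H) 2 with hv | hv
  · have hv : (nverts H : ℝ) - 2 ≤ 0 := by
      have : (nverts H : ℝ) ≤ 2 := by exact_mod_cast hv
      linarith
    exact (div_nonpos_of_nonneg_of_nonpos (by linarith) hv).trans (by linarith)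
  · have hv : (1 : ℝ) ≤ (nverts H : ℝ) - 2 := by
      have : (3 : ℝ) ≤ nverts H := by exact_mod_cast hv
      linarith
    exact (div_le_self (by linarith) hv).trans (by linarith)

lemma d2_le_m2D (hF : F.verts.Finite) (hHF : H ≤ F) (hH : 1 ≤ nedges H) : d2 H ≤ m2D F := by
  refine le_ciSup (f := fun H : {H : Sub W // H ≤ F ∧ 1 ≤ nedges H} => d2 H.1) ?_ ⟨H, hHF, hH⟩
  refine ⟨nedges F, Set.forall_mem_range.mpr fun K => (d2_le_nedges K.2.2).trans ?_⟩
  exact_mod_cast nedges_mono hF K.2.1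

lemma d2_pos (hF : F.verts.Finite) (he : 2 ≤ nedges F) : 0 < d2 F := by
  have hv : 3 ≤ nverts F := by
    by_contra! hv
    have hchoose : (nverts F).choose 2 ≤ 1 := by interval_cases (nverts F) <;> decide
    have := nedges_le_choose_two hF
    omega
  have hv : (3 : ℝ) ≤ nverts F := by exact_mod_cast hv
  have he : (2 : ℝ) ≤ nedges F := by exact_mod_cast he
  exact div_pos (by linarith) (by linarith)

/-- Multiplied out, this also covers a single edge (`v_H = 2`), where `d₂(H) = 0/0`. -/
lemma nedges_sub_one_le_m2D_mul (hF : F.verts.Finite) (hHF : H ≤ F) (hH : 1 ≤ nedges H) :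
    (nedges H : ℝ) - 1 ≤ m2D F * ((nverts H : ℝ) - 2) := by
  rcases le_or_gt (nverts H) 2 with hv | hv
  · have hchoose := nedges_le_choose_two (hF.subset hHF.1)
    have hv2 : nverts H = 2 := by interval_cases (nverts H) <;> simp_all
    have he1 : nedges H = 1 := by rw [hv2] at hchoose; simp at hchoose; omega
    simp [hv2, he1]
  · have hv : (0 : ℝ) < (nverts H : ℝ) - 2 := by
      have : (3 : ℝ) ≤ nverts H := by exact_mod_cast hv
      linarith
    exact (div_le_iff₀ hv).mp (d2_le_m2D hF hHF hH)

lemma TwoBalanced.m2D_mul_sub_le (hbal : TwoBalanced F) (hF : F.verts.Finite) (hHF : H ≤ F)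
    (hH : 1 ≤ nedges H) :
    m2D F * ((nverts F : ℝ) - nverts H) ≤ (nedges F : ℝ) - nedges H := by
  have hmono : (nedges H : ℝ) ≤ nedges F := by exact_mod_cast nedges_mono hF hHF
  by_cases hv : nverts F = 2
  · have hm2 : m2D F = 0 := by rw [(hbal : m2D F = d2 F), d2, hv]; norm_num
    rw [hm2, zero_mul]
    linarith
  have hv : (nverts F : ℝ) - 2 ≠ 0 := by
    rw [sub_ne_zero]; exact_mod_cast hv
  have hF2 : m2D F * ((nverts F : ℝ) - 2) = nedges F - 1 := by
    rw [(hbal : m2D F = d2 F), d2, div_mul_cancel₀ _ hv]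
  linear_combination hF2 + nedges_sub_one_le_m2D_mul hF hHF hH

end Density

section Asymptotics

open scoped Topology

variable {m : ℝ} {p : ℕ → ℝ}

lemma tendsto_pow_mul_pow_nhds_zero (hm : 0 < m)
    (hpo : p =o[atTop] fun n => (n : ℝ) ^ (-(1 / m))) {a b : ℕ} (hb : b ≠ 0) (hab : m * a ≤ b) :
    Tendsto (fun n : ℕ => (n : ℝ) ^ a * p n ^ b) atTop (𝓝 0) := by
  have hexp : (a : ℝ) + -(1 / m) * b ≤ 0 := by
    have : (a : ℝ) ≤ b / m := (le_div_iff₀' hm).mpr hab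
    rw [neg_mul, one_div_mul_eq_div]
    linarith
  have hbound : (fun n : ℕ => (n : ℝ) ^ a * ((n : ℝ) ^ (-(1 / m))) ^ b) =O[atTop]
      (fun _ => (1 : ℝ)) := by
    refine IsBigO.of_bound 1 ?_
    filter_upwards [eventually_ge_atTop 1] with n hn
    have hn : (1 : ℝ) ≤ n := by exact_mod_cast hn
    rw [norm_one, one_mul, Real.norm_of_nonneg (by positivity), ← Real.rpow_natCast,
      ← Real.rpow_natCast, ← Real.rpow_mul (by positivity), ← Real.rpow_add (by positivity)]
    exact Real.rpow_le_one_of_one_le_of_nonpos hn hexp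
  exact (isLittleO_one_iff ℝ).mp
    (((isBigO_refl _ _).mul_isLittleO (hpo.pow (Nat.pos_of_ne_zero hb))).trans_isBigO hbound)

lemma tendsto_pow_mul_pow_div_atTop (hm : 0 < m) (hp : ∀ n, 0 < p n)
    (hpo : p =o[atTop] fun n => (n : ℝ) ^ (-(1 / m))) {v e v' e' : ℕ} (hv : v ≤ v')
    (he : e < e') (h : m * ((v' : ℝ) - v) ≤ e' - e) :
    Tendsto (fun n : ℕ => (n : ℝ) ^ v * p n ^ e / ((n : ℝ) ^ v' * p n ^ e')) atTop atTop := by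
  obtain ⟨a, rfl⟩ := Nat.exists_eq_add_of_le hv
  obtain ⟨b, rfl⟩ := Nat.exists_eq_add_of_lt he
  have h0 := tendsto_pow_mul_pow_nhds_zero (a := a) (b := b + 1) hm hpo b.succ_ne_zero
    (by push_cast [add_sub_cancel_left] at h ⊢; linarith)
  have hpos : ∀ᶠ n : ℕ in atTop, (n : ℝ) ^ a * p n ^ (b + 1) ∈ Set.Ioi 0 := by
    filter_upwards [eventually_ge_atTop 1] with n hn
    have hn : (0 : ℝ) < n := by exact_mod_cast hn
    exact mul_pos (pow_pos hn a) (pow_pos (hp n) _)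
  refine (tendsto_nhdsWithin_of_tendsto_nhds_of_eventually_within _ h0 hpos
    ).inv_tendsto_nhdsGT_zero.congr' ?_
  filter_upwards [eventually_ge_atTop 1] with n hn
  have hn : (n : ℝ) ≠ 0 := by positivity
  have := (hp n).ne'
  simp only [Pi.inv_apply, pow_add]
  field_simp

end Asymptotics

theorem stmt7_general {W : Type} (F F₁ F₂ : Sub W)
    (hFfin : F.verts.Finite)
    (hbal : TwoBalanced F) (he : 2 ≤ nedges F)
    (hiso1 : Nonempty (F₁.coe ≃g F.coe)) (hiso2 : Nonempty (F₂.coe ≃g F.coe))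
    (hsome : (F₁.edgeSet ∩ F₂.edgeSet).Nonempty) (hnotall : ¬ F₁.edgeSet ⊆ F₂.edgeSet)
    (p : ℕ → ℝ) (hp : ∀ n, 0 < p n)
    (hpo : (fun n => p n) =o[atTop] fun n => (n : ℝ) ^ (-(1 / m2D F))) :
    Tendsto (fun n : ℕ => (n : ℝ) ^ nverts F * p n ^ nedges F /
        ((n : ℝ) ^ nverts (F₁ ⊔ F₂) * p n ^ nedges (F₁ ⊔ F₂)))
      atTop atTop := by
  obtain ⟨φ₁⟩ := hiso1
  obtain ⟨φ₂⟩ := hiso2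
  have h₁ := finite_verts_of_iso φ₁ hFfin
  have h₂ := finite_verts_of_iso φ₂ hFfin
  have hI : 1 ≤ nedges (F₁ ⊓ F₂) := by
    rw [nedges, Subgraph.edgeSet_inf]
    exact (Set.ncard_pos ((finite_edgeSet h₁).subset Set.inter_subset_left)).mpr hsome
  have hIlt : nedges (F₁ ⊓ F₂) < nedges F₁ := by
    rw [nedges, nedges, Subgraph.edgeSet_inf]
    exact Set.ncard_lt_ncard (Set.inter_ssubset_left_iff.mpr hnotall) (finite_edgeSet h₁)
  obtain ⟨I, hIF, hvI, heI⟩ := exists_le_nverts_nedges_eq_of_iso φ₁ (inf_le_left : F₁ ⊓ F₂ ≤ F₁)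
  have hverts := nverts_sup_add_nverts_inf h₁ h₂
  have hedges := nedges_sup_add_nedges_inf h₁ h₂
  rw [nverts_eq_of_iso φ₁, nverts_eq_of_iso φ₂, ← hvI] at hverts
  rw [nedges_eq_of_iso φ₁, nedges_eq_of_iso φ₂, ← heI] at hedges
  rw [nedges_eq_of_iso φ₁, ← heI] at hIlt
  refine tendsto_pow_mul_pow_div_atTop (hbal ▸ d2_pos hFfin he) hp hpo
    (by have := nverts_mono hFfin hIF; omega) (by omega) ?_
  have hverts : (nverts (F₁ ⊔ F₂) : ℝ) - nverts F = nverts F - nverts I := by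
    rw [sub_eq_sub_iff_add_eq_add]; exact_mod_cast hverts
  have hedges : (nedges (F₁ ⊔ F₂) : ℝ) - nedges F = nedges F - nedges I := by
    rw [sub_eq_sub_iff_add_eq_add]; exact_mod_cast hedges
  rw [hverts, hedges]
  exact hbal.m2D_mul_sub_le hFfin hIF (heI ▸ hI)

theorem stmt7 {W : Type} (F F₁ F₂ : Sub W)
    (hFfin : F.verts.Finite) (h1fin : F₁.verts.Finite) (h2fin : F₂.verts.Finite)
    (hbal : TwoBalanced F) (he : 2 ≤ nedges F)
    (hiso1 : Nonempty (F₁.coe ≃g F.coe)) (hiso2 : Nonempty (F₂.coe ≃g F.coe))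
    (hsome : (F₁.edgeSet ∩ F₂.edgeSet).Nonempty) (hnotall : ¬ F₁.edgeSet ⊆ F₂.edgeSet)
    (p : ℕ → ℝ) (hp : ∀ n, 0 < p n)
    (hpo : (fun n => p n) =o[atTop] fun n => (n : ℝ) ^ (-(1 / m2D F))) :
    Tendsto (fun n : ℕ => (n : ℝ) ^ nverts F * p n ^ nedges F /
        ((n : ℝ) ^ nverts (F₁ ⊔ F₂) * p n ^ nedges (F₁ ⊔ F₂)))
      atTop atTop :=
  stmt7_general F F₁ F₂ hFfin hbal he hiso1 hiso2 hsome hnotall p hp hpo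

end OG
end
end

section
/- Suppose (R,G) and (R,H) are balanced rooted graphs which agree on R (same root set and same edges inside R) with V(G) ∩ V(H) = R, and both have rooted density m(R,G) = m(R,H) = d. Then (R, G ∪ H) is a balanced rooted graph with m(R, G ∪ H) = d. -/
open Filter Asymptotics
open scoped Classical ENNReal

noncomputable section

namespace OG

variable {W U X : Type*}

variable {ι : Type*} [Fintype ι]

/-! Since `V(G) ∩ V(H) ⊆ R`, the non-root vertices and the non-root edges of any `K ≤ G ⊔ H`
split disjointly between `K ⊓ G` and `K ⊓ H`. Hence `d(R, K)` is the mediant of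
`d(R, K ⊓ G) ≤ d` and `d(R, K ⊓ H) ≤ d`, so it is at most `d`, with equality for `K = G ⊔ H`
because there both parts have density exactly `d`. -/

section RootedDensity

lemma edgeSet_subset_verts_sym2 (K : Sub W) : K.edgeSet ⊆ K.verts.sym2 := by
  rintro ⟨x, y⟩ h
  exact ⟨h.fst_mem, h.snd_mem⟩

lemma edgeSet_finite_of_verts_finite_s13 {K : Sub W} (hK : K.verts.Finite) : K.edgeSet.Finite :=
  (Set.sym2_eq_mk_image ▸ (hK.prod hK).image _ : K.verts.sym2.Finite).subset
    (edgeSet_subset_verts_sym2 K)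

lemma ncard_diff_eq_add_of_subset_union {α : Type*} {A B C S : Set α} (hB : B.Finite)
    (hC : C.Finite) (hA : A ⊆ B ∪ C) (hBC : B ∩ C ⊆ S) :
    (A \ S).ncard = ((A ∩ B) \ S).ncard + ((A ∩ C) \ S).ncard := by
  rw [← Set.ncard_union_eq _ (hB.inter_of_right A).sdiff (hC.inter_of_right A).sdiff]
  · congr 1
    ext x
    have := @hA x
    simp only [Set.mem_sdiff, Set.mem_union, Set.mem_inter_iff] at this ⊢
    tauto
  · rw [Set.disjoint_left]
    rintro x ⟨⟨-, hxB⟩, hxS⟩ ⟨⟨-, hxC⟩, -⟩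
    exact hxS (hBC ⟨hxB, hxC⟩)

variable (R : Set W)

lemma rdd_eq_ncard_diff {K : Sub W} (hK : K.verts.Finite) :
    rdd R K = ((K.edgeSet \ R.sym2).ncard : ℝ) / (K.verts \ R).ncard := by
  have hroot : {e ∈ K.edgeSet | ∀ x ∈ e, x ∈ R} = K.edgeSet ∩ R.sym2 := by
    ext e
    simp [Set.mem_sym2_iff_subset, Set.subset_def]
  have hE := Set.ncard_inter_add_ncard_sdiff_eq_ncard K.edgeSet R.sym2
    (edgeSet_finite_of_verts_finite_s13 hK)
  have hV := Set.ncard_inter_add_ncard_sdiff_eq_ncard K.verts R hK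
  rw [rdd, rInEdges, nedges, nverts, hroot, ← hE, ← hV]
  push_cast
  ring_nf

lemma edgeSet_diff_sym2_eq_empty {K : Sub W} (hK : K.verts ⊆ R) :
    K.edgeSet \ R.sym2 = ∅ :=
  Set.sdiff_eq_empty.2 <| (edgeSet_subset_verts_sym2 K).trans <| by
    rintro ⟨x, y⟩ ⟨hx, hy⟩
    exact ⟨hK hx, hK hy⟩

lemma rdd_nonneg {K : Sub W} (hK : K.verts.Finite) : 0 ≤ rdd R K := by
  rw [rdd_eq_ncard_diff R hK]
  positivity

/-- This holds also when `K.verts ⊆ R`, where `rdd R K = 0 / 0 = 0`. -/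
lemma rdd_le_iff {K : Sub W} (hK : K.verts.Finite) {d : ℝ} (hd : 0 ≤ d) :
    rdd R K ≤ d ↔ ((K.edgeSet \ R.sym2).ncard : ℝ) ≤ d * (K.verts \ R).ncard := by
  rw [rdd_eq_ncard_diff R hK]
  rcases (K.verts \ R).eq_empty_or_nonempty with h | h
  · rw [edgeSet_diff_sym2_eq_empty R (Set.sdiff_eq_empty.1 h), h]
    simp [hd]
  · rw [div_le_iff₀ (by exact_mod_cast (Set.ncard_pos hK.sdiff).2 h), mul_comm]

lemma ncard_edgeSet_diff_eq_mul {K : Sub W} (hK : K.verts.Finite) {d : ℝ}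
    (h : rdd R K = d) :
    ((K.edgeSet \ R.sym2).ncard : ℝ) = d * (K.verts \ R).ncard := by
  rw [← h, rdd_eq_ncard_diff R hK]
  rcases (K.verts \ R).eq_empty_or_nonempty with hV | hV
  · rw [edgeSet_diff_sym2_eq_empty R (Set.sdiff_eq_empty.1 hV), hV]
    simp
  · have : ((K.verts \ R).ncard : ℝ) ≠ 0 := by
      exact_mod_cast ((Set.ncard_pos hK.sdiff).2 hV).ne'
    field_simp

lemma rdd_le_ncard_edgeSet {G K : Sub W} (hG : G.verts.Finite) (hK : K ≤ G) :
    rdd R K ≤ G.edgeSet.ncard := by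
  have hE : (K.edgeSet \ R.sym2).ncard ≤ G.edgeSet.ncard :=
    Set.ncard_le_ncard (Set.sdiff_subset.trans (SimpleGraph.Subgraph.edgeSet_mono hK))
      (edgeSet_finite_of_verts_finite_s13 hG)
  rw [rdd_eq_ncard_diff R (hG.subset hK.1)]
  rcases Nat.eq_zero_or_pos (K.verts \ R).ncard with h | h
  · simp [h]
  · exact (div_le_self (by positivity) (by exact_mod_cast h)).trans (by exact_mod_cast hE)

lemma rdd_le_mRooted {G K : Sub W} (hG : G.verts.Finite) (hK : K ≤ G) :
    rdd R K ≤ mRooted R G :=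
  le_ciSup (f := fun L : {K : Sub W // K ≤ G} => rdd R L.1) ⟨G.edgeSet.ncard, by
    rintro _ ⟨L, rfl⟩
    exact rdd_le_ncard_edgeSet R hG L.2⟩ ⟨K, hK⟩

lemma mRooted_nonneg {G : Sub W} (hG : G.verts.Finite) : 0 ≤ mRooted R G :=
  (rdd_nonneg R (K := ⊥) Set.finite_empty).trans (rdd_le_mRooted R hG bot_le)

lemma mRooted_le {G : Sub W} {d : ℝ} (h : ∀ K ≤ G, rdd R K ≤ d) : mRooted R G ≤ d :=
  have : Nonempty {K : Sub W // K ≤ G} := ⟨⟨⊥, bot_le⟩⟩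
  ciSup_le fun K => h K.1 K.2

end RootedDensity

section Gluing

variable {R : Set W} {G H : Sub W}

lemma ncard_verts_diff_eq_add (hG : G.verts.Finite) (hH : H.verts.Finite)
    (hGH : G.verts ∩ H.verts ⊆ R) {K : Sub W} (hK : K ≤ G ⊔ H) :
    (K.verts \ R).ncard = ((K ⊓ G).verts \ R).ncard + ((K ⊓ H).verts \ R).ncard :=
  ncard_diff_eq_add_of_subset_union hG hH hK.1 hGH

lemma ncard_edgeSet_diff_eq_add (hG : G.verts.Finite) (hH : H.verts.Finite)
    (hGH : G.verts ∩ H.verts ⊆ R) {K : Sub W} (hK : K ≤ G ⊔ H) :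
    (K.edgeSet \ R.sym2).ncard =
      ((K ⊓ G).edgeSet \ R.sym2).ncard + ((K ⊓ H).edgeSet \ R.sym2).ncard := by
  rw [SimpleGraph.Subgraph.edgeSet_inf, SimpleGraph.Subgraph.edgeSet_inf]
  refine ncard_diff_eq_add_of_subset_union (edgeSet_finite_of_verts_finite_s13 hG)
    (edgeSet_finite_of_verts_finite_s13 hH) ?_ ?_
  · rw [← SimpleGraph.Subgraph.edgeSet_sup]
    exact SimpleGraph.Subgraph.edgeSet_mono hK
  · calc G.edgeSet ∩ H.edgeSet ⊆ G.verts.sym2 ∩ H.verts.sym2 :=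
          Set.inter_subset_inter (edgeSet_subset_verts_sym2 G) (edgeSet_subset_verts_sym2 H)
      _ = (G.verts ∩ H.verts).sym2 := (Set.sym2_inter _ _).symm
      _ ⊆ R.sym2 := fun _ he =>
          Set.mem_sym2_iff_subset.2 ((Set.mem_sym2_iff_subset.1 he).trans hGH)

theorem mRooted_sup_le_max (hG : G.verts.Finite) (hH : H.verts.Finite)
    (hGH : G.verts ∩ H.verts ⊆ R) :
    mRooted R (G ⊔ H) ≤ max (mRooted R G) (mRooted R H) := by
  set d := max (mRooted R G) (mRooted R H)
  have hd : 0 ≤ d := le_max_of_le_left (mRooted_nonneg R hG)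
  have hKG : ∀ K ≤ G ⊔ H, rdd R (K ⊓ G) ≤ d := fun K _ =>
    (rdd_le_mRooted R hG inf_le_right).trans (le_max_left _ _)
  have hKH : ∀ K ≤ G ⊔ H, rdd R (K ⊓ H) ≤ d := fun K _ =>
    (rdd_le_mRooted R hH inf_le_right).trans (le_max_right _ _)
  refine mRooted_le R fun K hK => ?_
  have h1 := (rdd_le_iff R (hG.subset (inf_le_right : K ⊓ G ≤ G).1) hd).1 (hKG K hK)
  have h2 := (rdd_le_iff R (hH.subset (inf_le_right : K ⊓ H ≤ H).1) hd).1 (hKH K hK)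
  rw [rdd_le_iff R ((hG.union hH).subset hK.1) hd, ncard_verts_diff_eq_add hG hH hGH hK,
    ncard_edgeSet_diff_eq_add hG hH hGH hK]
  push_cast
  linarith

theorem rdd_sup_eq (hG : G.verts.Finite) (hH : H.verts.Finite)
    (hGH : G.verts ∩ H.verts ⊆ R) {d : ℝ} (hGd : rdd R G = d) (hHd : rdd R H = d) :
    rdd R (G ⊔ H) = d := by
  have hE := ncard_edgeSet_diff_eq_add hG hH hGH (le_refl (G ⊔ H))
  have hV := ncard_verts_diff_eq_add hG hH hGH (le_refl (G ⊔ H))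
  rw [inf_eq_right.2 le_sup_left, inf_eq_right.2 le_sup_right] at hE hV
  rw [rdd_eq_ncard_diff R (hG.union hH), hE, hV]
  push_cast
  rw [ncard_edgeSet_diff_eq_mul R hG hGd, ncard_edgeSet_diff_eq_mul R hH hHd, ← mul_add]
  rcases eq_or_ne (((G.verts \ R).ncard : ℝ) + (H.verts \ R).ncard) 0 with h0 | h0
  · have hG0 : (G.verts \ R).ncard = 0 := by
      exact_mod_cast ((add_eq_zero_iff_of_nonneg (by positivity) (by positivity)).1 h0).1
    rw [h0, div_zero, ← hGd, rdd_eq_ncard_diff R hG, hG0, Nat.cast_zero, div_zero]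
  · field_simp

end Gluing

theorem stmt13_general {W : Type} (R : Set W) (G H : Sub W)
    (hGfin : G.verts.Finite) (hHfin : H.verts.Finite)
    (hmeet : G.verts ∩ H.verts = R)
    (hbG : BalancedRooted R G) (hbH : BalancedRooted R H)
    (d : ℝ) (hdG : mRooted R G = d) (hdH : mRooted R H = d) :
    BalancedRooted R (G ⊔ H) ∧ mRooted R (G ⊔ H) = d := by
  have hrdd : rdd R (G ⊔ H) = d :=
    rdd_sup_eq hGfin hHfin hmeet.le (hbG ▸ hdG) (hbH ▸ hdH)
  have hm : mRooted R (G ⊔ H) = d := by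
    refine le_antisymm ?_ (hrdd ▸ rdd_le_mRooted R (hGfin.union hHfin) le_rfl)
    simpa only [hdG, hdH, max_self] using mRooted_sup_le_max hGfin hHfin hmeet.le
  exact ⟨hm.trans hrdd.symm, hm⟩

theorem stmt13 {W : Type} (R : Set W) (G H : Sub W)
    (hGfin : G.verts.Finite) (hHfin : H.verts.Finite)
    (hRG : R ⊆ G.verts) (hRH : R ⊆ H.verts)
    (hagree : ∀ x ∈ R, ∀ y ∈ R, (G.Adj x y ↔ H.Adj x y))
    (hmeet : G.verts ∩ H.verts = R)
    (hbG : BalancedRooted R G) (hbH : BalancedRooted R H)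
    (d : ℝ) (hdG : mRooted R G = d) (hdH : mRooted R H = d) :
    BalancedRooted R (G ⊔ H) ∧ mRooted R (G ⊔ H) = d :=
  stmt13_general R G H hGfin hHfin hmeet hbG hbH d hdG hdH

end OG
end
end
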